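/- arXiv:1608.00259 — 5 statements merged into one kernel-verified Lean document; each statement's English description precedes it below -/
import Mathlib

section
/- Let A be a finite abelian group with d(A) ≥ 3. Then the nim-number of the achievement game GEN(Dih(A)) is 0. -/
/-- An *intersection subgroup* of `G`: an intersection of a nonempty
collection of maximal subgroups of `G`. -/
def IsIntersectionSubgroup {G : Type*} [Group G] (I : Subgroup G) : Prop :=
  ∃ 𝒩 : Set (Subgroup G), 𝒩.Nonempty ∧ (∀ M ∈ 𝒩, IsCoatom M) ∧ I = sInf 𝒩

/-- `⌈P⌉`: the intersection of all maximal subgroups of `G` containing `P`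
(the smallest intersection subgroup containing a non-generating set `P`). -/
def interCeil {G : Type*} [Group G] (P : Set G) : Subgroup G :=
  sInf {M : Subgroup G | IsCoatom M ∧ P ⊆ (M : Set G)}

/-- The *deficiency* `δ(P)` of a subset `P ⊆ G`: the minimum size of a
finite subset `Q ⊆ G` with `⟨P ∪ Q⟩ = G`. -/
noncomputable def deficiency {G : Type*} [Group G] (P : Set G) : ℕ :=
  sInf {n : ℕ | ∃ Q : Finset G, Q.card = n ∧ Subgroup.closure (P ∪ ↑Q) = ⊤}

/-- `d(G)`: the minimum size of a generating set of `G`. -/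
noncomputable def minGen (G : Type*) [Group G] : ℕ :=
  sInf {n : ℕ | ∃ S : Finset G, S.card = n ∧ Subgroup.closure (S : Set G) = ⊤}

open Classical in
/-- The nim-number of a position `P` in the achievement game `GEN(G)`:
positions generating `G` are terminal (they have no options, so their
nim-number is `mex ∅ = 0`); the options of a non-generating position `P`
are the positions `P ∪ {g}` for `g ∈ G \ P`, and
`nim(P) = mex {nim(P ∪ {g}) | g ∈ G \ P}` is the least natural number
that is not the nim-number of an option of `P`. -/
noncomputable def gameNim {G : Type*} [Group G] [Fintype G] (P : Set G) : ℕ :=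
  if Subgroup.closure P = ⊤ then 0
  else sInf {n : ℕ | ∀ g ∉ P, n ≠ gameNim (insert g P)}
termination_by Fintype.card G - P.ncard
decreasing_by
  have h1 : (insert g P).ncard = P.ncard + 1 :=
    Set.ncard_insert_of_notMem ‹g ∉ P› (Set.toFinite P)
  have h2 : (insert g P).ncard ≤ Fintype.card G := by
    have := Set.ncard_le_ncard (Set.subset_univ (insert g P)) (Set.toFinite _)
    simpa [Set.ncard_univ, Nat.card_eq_fintype_card] using this
  omega

/-- The homomorphism `C₂ → Aut A` sending the nontrivial element of `C₂`
to the inversion automorphism `a ↦ a⁻¹` of the abelian group `A`. -/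
def dihTwist (A : Type*) [CommGroup A] : Multiplicative (ZMod 2) →* MulAut A where
  toFun k := if (Multiplicative.toAdd k) = 0 then 1 else MulEquiv.inv A
  map_one' := by simp
  map_mul' := by
    intro a b
    have hinv : (MulEquiv.inv A) * (MulEquiv.inv A) = 1 := by
      ext x
      simp
    have hcases : ∀ x : ZMod 2, x = 0 ∨ x = 1 := by decide
    have h11 : (1 : ZMod 2) + 1 = 0 := by decide
    have hab : Multiplicative.toAdd (a * b)
        = Multiplicative.toAdd a + Multiplicative.toAdd b := rfl
    rcases hcases (Multiplicative.toAdd a) with h1 | h1 <;>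
      rcases hcases (Multiplicative.toAdd b) with h2 | h2 <;>
      simp [hab, h1, h2, hinv, h11]

/-- The generalized dihedral group `Dih(A) = C₂ ⋉ A`: the semidirect product
in which the nontrivial element of `C₂` acts on the abelian group `A` by
inversion. -/
abbrev Dih (A : Type*) [CommGroup A] :=
  SemidirectProduct A (Multiplicative (ZMod 2)) (dihTwist A)

/-- The natural inclusion `A ↪ Dih(A)`, identifying `A` with a normal
subgroup of index 2 of `Dih(A)`. -/
abbrev DihInl (A : Type*) [CommGroup A] : A →* Dih A := SemidirectProduct.inl

/-- `Dih A` is in bijection with `A × C₂`. -/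
def dihEquivProd (A : Type*) [CommGroup A] : Dih A ≃ A × Multiplicative (ZMod 2) where
  toFun x := (x.left, x.right)
  invFun p := ⟨p.1, p.2⟩
  left_inv _ := rfl
  right_inv _ := rfl

instance (A : Type*) [CommGroup A] [Fintype A] : Fintype (Dih A) :=
  Fintype.ofEquiv _ (dihEquivProd A).symm

section Aux

open SemidirectProduct

variable {A : Type*} [CommGroup A]

lemma zmod2cases : ∀ u : Multiplicative (ZMod 2), u = 1 ∨ u = Multiplicative.ofAdd 1 := by
  decide

lemma dihTwist_mem (B : Subgroup A) (r : Multiplicative (ZMod 2)) {x : A} (hx : x ∈ B) :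
    dihTwist A r x ∈ B := by
  rcases zmod2cases r with h | h <;> simp [dihTwist, h, hx, inv_mem hx]

/-- The preimage in `Dih A` of a subgroup of `A`. -/
def dihLift (B : Subgroup A) : Subgroup (Dih A) where
  carrier := {x | x.left ∈ B}
  one_mem' := B.one_mem
  mul_mem' := by
    intro a b ha hb
    simp only [Set.mem_setOf_eq, SemidirectProduct.mul_left] at *
    exact mul_mem ha (dihTwist_mem B _ hb)
  inv_mem' := by
    intro a ha
    simp only [Set.mem_setOf_eq, SemidirectProduct.inv_left] at *
    exact dihTwist_mem B _ (inv_mem ha)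

lemma closure_setOf_le (S : Set A) :
    Subgroup.closure {x : Dih A | x.left ∈ S} ≤ dihLift (Subgroup.closure S) :=
  Subgroup.closure_le _ |>.mpr (fun _ hx => Subgroup.subset_closure hx)

lemma closure_setOf_ne_top {S : Set A} (h : Subgroup.closure S ≠ ⊤) :
    Subgroup.closure {x : Dih A | x.left ∈ S} ≠ ⊤ := by
  intro htop
  apply h
  rw [eq_top_iff]
  intro a _
  have : SemidirectProduct.inl a ∈ dihLift (Subgroup.closure S) :=
    closure_setOf_le S (htop ▸ Subgroup.mem_top _)
  exact this

lemma inr_mem_of_r0 {H : Subgroup (Dih A)}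
    (hr : (inr (Multiplicative.ofAdd 1) : Dih A) ∈ H) (u : Multiplicative (ZMod 2)) :
    (inr u : Dih A) ∈ H := by
  rcases zmod2cases u with h | h <;> simp [h, hr, one_mem]

lemma inl_left_mem {H : Subgroup (Dih A)}
    (hr : (inr (Multiplicative.ofAdd 1) : Dih A) ∈ H) {x : Dih A} (hx : x ∈ H) :
    (inl x.left : Dih A) ∈ H := by
  have : (inl x.left : Dih A) = x * (inr x.right)⁻¹ := by
    rw [eq_mul_inv_iff_mul_eq, inl_left_mul_inr_right]
  rw [this]
  exact mul_mem hx (inv_mem (inr_mem_of_r0 hr x.right))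

lemma top_of_inl_inr {H : Subgroup (Dih A)}
    (hr : (inr (Multiplicative.ofAdd 1) : Dih A) ∈ H)
    (hl : ∀ a : A, (inl a : Dih A) ∈ H) : H = ⊤ := by
  rw [eq_top_iff]
  intro x _
  rw [← inl_left_mul_inr_right (x := x)]
  exact mul_mem (hl x.left) (inr_mem_of_r0 hr x.right)

lemma closure_ne_top_of_NC {S : Set A}
    (hNC : ∀ c : A, Subgroup.closure (S ∪ {c}) ≠ ⊤) : Subgroup.closure S ≠ ⊤ := by
  intro ht
  exact hNC 1 (eq_top_iff.mpr (ht ▸ Subgroup.closure_mono Set.subset_union_left))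

lemma key_lemma (A : Type*) [CommGroup A] [Fintype A] (h3 : 3 ≤ minGen A) :
    ∀ n : ℕ, ∀ S : Set A, Fintype.card A - S.ncard ≤ n →
      (∀ c : A, Subgroup.closure (S ∪ {c}) ≠ ⊤) →
      gameNim {x : Dih A | x.left ∈ S} = 0 := by
  intro n
  induction n with
  | zero =>
    intro S hn hNC
    exfalso
    have hSuniv : S = Set.univ := by
      apply Set.eq_of_subset_of_ncard_le (Set.subset_univ S) _ Set.finite_univ
      rw [Set.ncard_univ, Nat.card_eq_fintype_card]
      omega
    exact closure_ne_top_of_NC hNC (by rw [hSuniv, Subgroup.closure_univ])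
  | succ n IH =>
    intro S hn hNC
    classical
    set P : Set (Dih A) := {x : Dih A | x.left ∈ S} with hP
    have hSne : Subgroup.closure S ≠ ⊤ := closure_ne_top_of_NC hNC
    rw [gameNim.eq_def, if_neg (closure_setOf_ne_top hSne)]
    apply Nat.sInf_eq_zero.mpr
    left
    intro g hg
    have ha : g.left ∉ S := hg
    -- the enlarged position does not generate
    have hC : Subgroup.closure (insert g P) ≠ ⊤ := by
      intro ht
      apply closure_setOf_ne_top (hNC g.left)
      rw [eq_top_iff, ← ht]
      apply Subgroup.closure_mono
      intro x hx
      rcases hx with rfl | hx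
      · exact Set.mem_union_right _ rfl
      · exact Set.mem_union_left _ hx
    rw [gameNim.eq_def, if_neg hC]
    -- produce a winning answer y
    obtain ⟨y, hy_notmem, hy0⟩ :
        ∃ y, y ∉ insert g P ∧ gameNim (insert y (insert g P)) = 0 := by
      by_cases hex : ∃ c, Subgroup.closure (S ∪ {g.left} ∪ {c}) = ⊤
      · -- some single extra element finishes generation: choose it well
        obtain ⟨c, hcS, hca, hct⟩ : ∃ c, c ∉ S ∧ c ≠ g.left ∧
            Subgroup.closure (S ∪ {g.left} ∪ {c}) = ⊤ := by
          obtain ⟨c₀, hc₀⟩ := hex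
          by_cases hBtop : Subgroup.closure (S ∪ {g.left}) = ⊤
          · have hcard : 3 ≤ Fintype.card A := by
              have : minGen A ≤ Fintype.card A := by
                apply Nat.sInf_le
                exact ⟨Finset.univ, by simp, by simp⟩
              omega
            have hclaim : ∃ c, c ∉ (Subgroup.closure S : Set A) ∧ c ≠ g.left := by
              by_contra hall
              push_neg at hall
              by_cases haB : g.left ∈ Subgroup.closure S
              · apply hSne
                rw [eq_top_iff]
                intro x _
                by_cases hx : x ∈ Subgroup.closure S
                · exact hx
                · exact (hall x hx) ▸ haB
              · obtain ⟨b, hb⟩ : ∃ b : A, b ≠ 1 ∧ b ≠ g.left := by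
                  have hsd : (Finset.univ \ ({1, g.left} : Finset A)).Nonempty := by
                    rw [← Finset.card_pos, Finset.card_sdiff_of_subset (Finset.subset_univ _)]
                    have h2 : ({1, g.left} : Finset A).card ≤ 2 :=
                      (Finset.card_insert_le _ _).trans (by simp)
                    have := Finset.card_univ (α := A)
                    omega
                  obtain ⟨b, hb⟩ := hsd
                  refine ⟨b, ?_⟩
                  simpa using (Finset.mem_sdiff.mp hb).2
                have hbB : b ∈ Subgroup.closure S := by
                  by_contra hbB
                  exact hb.2 (hall b hbB)
                have habB : g.left * b ∈ Subgroup.closure S := by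
                  by_contra habB
                  have heq := hall _ habB
                  have hb1 : b = 1 := by
                    have h1 : g.left * b = g.left * 1 := by simpa using heq
                    exact mul_left_cancel h1
                  exact hb.1 hb1
                have : (g.left * b) * b⁻¹ ∈ Subgroup.closure S :=
                  mul_mem habB (inv_mem hbB)
                rw [mul_inv_cancel_right] at this
                exact haB this
            obtain ⟨c, hc1, hc2⟩ := hclaim
            refine ⟨c, fun hcS => hc1 (Subgroup.subset_closure hcS), hc2, ?_⟩
            rw [eq_top_iff, ← hBtop]
            exact Subgroup.closure_mono Set.subset_union_left
          · have hc₀B : c₀ ∉ Subgroup.closure (S ∪ {g.left}) := by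
              intro hmem
              apply hBtop
              rw [eq_top_iff, ← hc₀]
              apply (Subgroup.closure_le _).mpr
              intro x hx
              rcases hx with hx | rfl
              · exact Subgroup.subset_closure hx
              · exact hmem
            refine ⟨c₀, ?_, ?_, hc₀⟩
            · exact fun hc => hc₀B (Subgroup.subset_closure (Set.mem_union_left _ hc))
            · rintro rfl
              exact hc₀B (Subgroup.subset_closure (Set.mem_union_right _ rfl))
        -- the winning move
        set y : Dih A := inl c * inr (Multiplicative.ofAdd 1) with hy
        have hyleft : y.left = c := by simp [hy, SemidirectProduct.mul_left]
        refine ⟨y, ?_, ?_⟩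
        · intro hmem
          rw [Set.mem_insert_iff] at hmem
          rcases hmem with heq | hmem
          · exact hca (by rw [← heq]; exact hyleft.symm)
          · exact hcS (by rw [← hyleft]; exact hmem)
        · have htop : Subgroup.closure (insert y (insert g P)) = ⊤ := by
            have hSne' : S.Nonempty := by
              rw [Set.nonempty_iff_ne_empty]
              rintro rfl
              have hgen : Subgroup.closure (({g.left, c} : Finset A) : Set A) = ⊤ := by
                rw [← hct]
                congr 1
                simp [Set.union_comm, Set.union_singleton]
              have : minGen A ≤ ({g.left, c} : Finset A).card :=
                Nat.sInf_le ⟨_, rfl, hgen⟩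
              have h2 : ({g.left, c} : Finset A).card ≤ 2 :=
                (Finset.card_insert_le _ _).trans (by simp)
              omega
            obtain ⟨s, hs⟩ := hSne'
            set H := Subgroup.closure (insert y (insert g P)) with hH
            have hsub : insert y (insert g P) ⊆ H := Subgroup.subset_closure
            have hsP : (inl s : Dih A) ∈ H := by
              apply hsub
              exact Or.inr (Or.inr (by simpa [hP] using hs))
            have hs2 : (inl s * inr (Multiplicative.ofAdd 1) : Dih A) ∈ H := by
              apply hsub
              refine Or.inr (Or.inr ?_)
              show (inl s * inr (Multiplicative.ofAdd 1) : Dih A).left ∈ S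
              simpa [SemidirectProduct.mul_left] using hs
            have hr : (inr (Multiplicative.ofAdd 1) : Dih A) ∈ H := by
              have := mul_mem (inv_mem hsP) hs2
              rwa [inv_mul_cancel_left] at this
            have hgH : g ∈ H := hsub (Or.inr (Or.inl rfl))
            have hyH : y ∈ H := hsub (Or.inl rfl)
            apply top_of_inl_inr hr
            intro b
            have hK : Subgroup.closure (S ∪ {g.left} ∪ {c}) ≤
                H.comap (inl : A →* Dih A) := by
              apply (Subgroup.closure_le _).mpr
              intro x hx
              rcases hx with hx | rfl
              · rcases hx with hx | rfl
                · exact hsub (Or.inr (Or.inr (by simpa [hP] using hx)))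
                · exact inl_left_mem hr hgH
              · have := inl_left_mem hr hyH
                rwa [hyleft] at this
            have : b ∈ H.comap (inl : A →* Dih A) := by
              apply hK
              rw [hct]
              trivial
            exact this
          rw [gameNim.eq_def, if_pos htop]
      · -- no single element finishes: mirror the move
        push_neg at hex
        set y : Dih A := g * inr (Multiplicative.ofAdd 1) with hy
        have hyleft : y.left = g.left := by simp [hy, SemidirectProduct.mul_left]
        have hyright : y.right = g.right * Multiplicative.ofAdd 1 := by
          simp [hy, SemidirectProduct.mul_right]
        refine ⟨y, ?_, ?_⟩
        · intro hmem
          rcases hmem with heq | hmem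
          · have : y.right = g.right := by rw [heq]
            rw [hyright] at this
            have h1 : (Multiplicative.ofAdd (1 : ZMod 2)) = 1 :=
              mul_left_cancel (a := g.right) (by rw [mul_one]; exact this)
            exact absurd h1 (by decide)
          · exact ha (by rw [← hyleft]; exact hmem)
        · have hset : insert y (insert g P) = {x : Dih A | x.left ∈ insert g.left S} := by
            ext x
            simp only [Set.mem_insert_iff, Set.mem_setOf_eq, hP]
            constructor
            · rintro (rfl | rfl | hx)
              · exact Or.inl hyleft
              · exact Or.inl rfl
              · exact Or.inr hx
            · rintro (hxl | hx)
              · rcases zmod2cases (g.right⁻¹ * x.right) with hu | hu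
                · right; left
                  apply SemidirectProduct.ext
                  · exact hxl
                  · exact (inv_mul_eq_one.mp hu).symm
                · left
                  apply SemidirectProduct.ext
                  · rw [hxl, hyleft]
                  · rw [hyright]
                    calc x.right = g.right * (g.right⁻¹ * x.right) := by group
                    _ = g.right * Multiplicative.ofAdd 1 := by rw [hu]
              · exact Or.inr (Or.inr hx)
          rw [hset]
          apply IH (insert g.left S)
          · rw [Set.ncard_insert_of_notMem ha (Set.toFinite S)]
            omega
          · intro c
            have heq : insert g.left S ∪ {c} = S ∪ {g.left} ∪ {c} := by
              simp [Set.union_singleton]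
            rw [heq]
            exact hex c
    -- conclude sInf ≠ 0
    intro h0
    have hne : {m : ℕ | ∀ z ∉ insert g P, m ≠ gameNim (insert z (insert g P))}.Nonempty := by
      refine ⟨(Finset.univ.sup fun z : Dih A => gameNim (insert z (insert g P))) + 1, ?_⟩
      intro z hz hEq
      have hle : gameNim (insert z (insert g P)) ≤
          Finset.univ.sup (fun z : Dih A => gameNim (insert z (insert g P))) :=
        Finset.le_sup (f := fun z : Dih A => gameNim (insert z (insert g P))) (Finset.mem_univ z)
      omega
    have hmem := Nat.sInf_mem hne
    rw [← h0] at hmem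
    exact (hmem y hy_notmem) hy0.symm

end Aux

/-- If `A` is a finite abelian group with `d(A) ≥ 3`, then the nim-number of
the achievement game `GEN(Dih(A))` is `0`. -/
theorem gameNim_dih_of_three_le_minGen (A : Type*) [CommGroup A] [Fintype A]
    (h : 3 ≤ minGen A) :
    gameNim (∅ : Set (Dih A)) = 0 := by
  have hempty : (∅ : Set (Dih A)) = {x : Dih A | x.left ∈ (∅ : Set A)} := by
    ext x; simp
  rw [hempty]
  apply key_lemma A h (Fintype.card A)
  · simp
  · intro c ht
    have hc : Subgroup.closure (({c} : Finset A) : Set A) = ⊤ := by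
      rw [← ht]
      congr 1
      simp
    have : minGen A ≤ ({c} : Finset A).card := Nat.sInf_le ⟨_, rfl, hc⟩
    simp at this
    omega
end

section
/- Let A be a finite abelian group of even order with d(A) = 2. Then the nim-number of the achievement game GEN(Dih(A)) is 0. -/
section Aux

variable {A : Type*} [CommGroup A]

notation "τ" => Multiplicative.ofAdd (1 : ZMod 2)

lemma twist_one (c : A) : dihTwist A 1 c = c := by
  simp [dihTwist]

lemma twist_tau (c : A) : dihTwist A τ c = c⁻¹ := by
  have : (Multiplicative.toAdd τ) = (1 : ZMod 2) := rfl
  simp [dihTwist, this]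

lemma rcases2 : ∀ r : Multiplicative (ZMod 2), r = 1 ∨ r = τ := by decide

lemma tau_mul_tau : τ * τ = (1 : Multiplicative (ZMod 2)) := by decide

lemma tau_ne_one : τ ≠ (1 : Multiplicative (ZMod 2)) := by decide

/-- The "dihedral-type" subgroup of `Dih A` determined by `B ≤ A` and coset rep `b`. -/
def dihSub (B : Subgroup A) (b : A) : Subgroup (Dih A) where
  carrier := {p | (p.right = 1 ∧ p.left ∈ B) ∨ (p.right = τ ∧ p.left * b⁻¹ ∈ B)}
  one_mem' := Or.inl ⟨rfl, one_mem B⟩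
  mul_mem' := by
    rintro p q (⟨hp, hpl⟩ | ⟨hp, hpl⟩) (⟨hq, hql⟩ | ⟨hq, hql⟩) <;>
      simp only [Set.mem_setOf_eq, SemidirectProduct.mul_left, SemidirectProduct.mul_right,
        hp, hq, one_mul, mul_one, tau_mul_tau, twist_one, twist_tau]
    · exact Or.inl ⟨trivial, mul_mem hpl hql⟩
    · refine Or.inr ⟨trivial, ?_⟩
      have : p.left * q.left * b⁻¹ = p.left * (q.left * b⁻¹) := by group
      rw [this]; exact mul_mem hpl hql
    · refine Or.inr ⟨trivial, ?_⟩
      have : p.left * q.left⁻¹ * b⁻¹ = (p.left * b⁻¹) * q.left⁻¹ := by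
        rw [mul_assoc, mul_comm q.left⁻¹ b⁻¹, ← mul_assoc]
      rw [this]; exact mul_mem hpl (inv_mem hql)
    · refine Or.inl ⟨trivial, ?_⟩
      have : p.left * q.left⁻¹ = (p.left * b⁻¹) * (q.left * b⁻¹)⁻¹ := by group
      rw [this]; exact mul_mem hpl (inv_mem hql)
  inv_mem' := by
    rintro p (⟨hp, hpl⟩ | ⟨hp, hpl⟩) <;>
      simp only [Set.mem_setOf_eq, SemidirectProduct.inv_left, SemidirectProduct.inv_right, hp,
        inv_one, twist_one, one_mul]
    · exact Or.inl ⟨trivial, inv_mem hpl⟩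
    · have htin : τ⁻¹ = τ := by decide
      rw [htin, twist_tau, inv_inv]
      exact Or.inr ⟨rfl, hpl⟩

lemma mem_dihSub_of_right_one {B : Subgroup A} {b : A} {p : Dih A}
    (hp : p.right = 1) (hl : p.left ∈ B) : p ∈ dihSub B b := Or.inl ⟨hp, hl⟩

lemma mem_dihSub_of_right_tau {B : Subgroup A} {b : A} {p : Dih A}
    (hp : p.right = τ) (hl : p.left * b⁻¹ ∈ B) : p ∈ dihSub B b := Or.inr ⟨hp, hl⟩

lemma dihSub_ne_top {B : Subgroup A} (b : A) (hB : B ≠ ⊤) : dihSub B b ≠ (⊤ : Subgroup (Dih A)) := by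
  intro htop
  obtain ⟨c, hc⟩ : ∃ c : A, c ∉ B := by
    by_contra hall
    push_neg at hall
    exact hB ((Subgroup.eq_top_iff' B).2 hall)
  have : DihInl A c ∈ dihSub B b := htop ▸ Subgroup.mem_top _
  rcases this with ⟨_, hl⟩ | ⟨hr, _⟩
  · exact hc (by simpa [SemidirectProduct.left_inl] using hl)
  · exact tau_ne_one (by simpa [SemidirectProduct.right_inl] using hr.symm)

lemma closure_singleton_ne_top (h2 : minGen A = 2) (c : A) :
    Subgroup.closure ({c} : Set A) ≠ ⊤ := by
  intro htop
  have h1 : (1 : ℕ) ∈ {n : ℕ | ∃ S : Finset A, S.card = n ∧ Subgroup.closure (S : Set A) = ⊤} := by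
    exact ⟨{c}, Finset.card_singleton c, by simpa using htop⟩
  have := Nat.sInf_le h1
  rw [minGen] at h2
  omega

lemma inl_range_ne_top : (DihInl A).range ≠ ⊤ := by
  intro htop
  have : (SemidirectProduct.inr τ : Dih A) ∈ (DihInl A).range := htop ▸ Subgroup.mem_top _
  obtain ⟨a, ha⟩ := this
  have := congrArg SemidirectProduct.right ha
  simp [SemidirectProduct.right_inl, SemidirectProduct.right_inr] at this
  exact tau_ne_one this.symm

/-- `d(Dih A) ≥ 3`: no two elements generate `Dih A`. -/
lemma pair_closure_ne_top (h2 : minGen A = 2) (x y : Dih A) :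
    Subgroup.closure ({x, y} : Set (Dih A)) ≠ ⊤ := by
  have key : ∀ u v : Dih A, u.right = 1 → Subgroup.closure ({u, v} : Set (Dih A)) ≠ ⊤ := by
    intro u v hu
    rcases rcases2 v.right with hv | hv
    · -- both in A: contained in range of inl
      intro htop
      apply inl_range_ne_top (A := A)
      rw [eq_top_iff, ← htop]
      apply Subgroup.closure_le _ |>.2
      rintro p hp
      have hr : p.right = 1 := by rcases hp with rfl | rfl <;> assumption
      exact ⟨p.left, by ext <;> simp [hr]⟩
    · -- u in A, v reflection
      intro htop
      apply dihSub_ne_top (A := A) (B := Subgroup.closure {u.left}) v.left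
        (closure_singleton_ne_top h2 u.left)
      rw [eq_top_iff, ← htop]
      apply Subgroup.closure_le _ |>.2
      rintro p (rfl | rfl)
      · exact mem_dihSub_of_right_one hu (Subgroup.subset_closure rfl)
      · exact mem_dihSub_of_right_tau hv (by simpa using one_mem _)
  rcases rcases2 x.right with hx | hx
  · exact key x y hx
  · rcases rcases2 y.right with hy | hy
    · rw [Set.pair_comm]; exact key y x hy
    · -- both reflections
      intro htop
      apply dihSub_ne_top (A := A) (B := Subgroup.closure {x.left * y.left⁻¹}) y.left
        (closure_singleton_ne_top h2 _)
      rw [eq_top_iff, ← htop]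
      apply Subgroup.closure_le _ |>.2
      rintro p (rfl | rfl)
      · exact mem_dihSub_of_right_tau hx (Subgroup.subset_closure rfl)
      · exact mem_dihSub_of_right_tau hy (by simpa using one_mem _)

open Subgroup in
lemma closure_insert_of_mem' {G : Type*} [Group G] {S : Set G} {h : G}
    (hh : h ∈ Subgroup.closure S) : Subgroup.closure (insert h S) = Subgroup.closure S := by
  refine le_antisymm ?_ (Subgroup.closure_mono (Set.subset_insert _ _))
  rw [Subgroup.closure_le]
  rintro p (rfl | hp)
  · exact hh
  · exact Subgroup.subset_closure hp

/-- positions from which no single element completes a generating set -/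
def Safe2 {G : Type*} [Group G] (P : Set G) : Prop :=
  ∀ g : G, Subgroup.closure (insert g P) ≠ ⊤

lemma Safe2.closure_ne_top {G : Type*} [Group G] {P : Set G} (h : Safe2 P) :
    Subgroup.closure P ≠ ⊤ := by
  intro htop
  apply h 1
  rw [eq_top_iff, ← htop]
  exact Subgroup.closure_mono (Set.subset_insert _ _)

def GoodPos {G : Type*} [Group G] (P : Set G) : Prop :=
  Safe2 P ∧ Even P.ncard ∧
    (P.Nonempty → ∃ z ∈ Subgroup.closure P, z ≠ 1 ∧ z * z = 1)

-- involution in A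
lemma exists_invol (hA : Even (Nat.card A)) [Fintype A] : ∃ z : A, z ≠ 1 ∧ z * z = 1 := by
  have hdvd : 2 ∣ Fintype.card A := by
    rw [← Nat.card_eq_fintype_card]
    exact hA.two_dvd
  obtain ⟨z, hz⟩ := exists_prime_orderOf_dvd_card 2 hdvd
  refine ⟨z, ?_, ?_⟩
  · intro h1; rw [h1, orderOf_one] at hz; omega
  · have := pow_orderOf_eq_one z
    rw [hz] at this
    simpa [pow_two] using this

lemma even_add_two' {n : ℕ} (h : Even n) : Even (n + 2) := by
  obtain ⟨m, hm⟩ := h; exact ⟨m + 1, by omega⟩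

variable [Fintype A]

lemma move_main {P : Set (Dih A)} (hsafe : Safe2 P) (heven : Even P.ncard)
    (hinv : P.Nonempty → ∃ z ∈ Subgroup.closure P, z ≠ 1 ∧ z * z = 1)
    (hP : P.Nonempty) {g : Dih A} (hg : g ∉ P)
    (hfin : ∀ k, Subgroup.closure (insert k (insert g P)) ≠ ⊤) :
    ∃ h ∉ insert g P, GoodPos (insert h (insert g P)) := by
  obtain ⟨z, hzmem, hz1, hzsq⟩ := hinv hP
  have hsubP : Subgroup.closure P ≤ Subgroup.closure (insert g P) :=
    Subgroup.closure_mono (Set.subset_insert _ _)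
  set P₁ := insert g P with hP₁def
  set H := Subgroup.closure P₁ with hHdef
  have hzH : z ∈ H := hsubP hzmem
  have horder : orderOf (⟨z, hzH⟩ : H) = 2 := by
    have hsq : (⟨z, hzH⟩ : H) ^ 2 = 1 := by
      rw [pow_two]; exact Subtype.ext hzsq
    have hne : (⟨z, hzH⟩ : H) ≠ 1 := by
      intro hcon; exact hz1 (congrArg Subtype.val hcon)
    exact orderOf_eq_prime hsq hne
  have hcardH : Even (Nat.card H) := by
    have := orderOf_dvd_natCard (⟨z, hzH⟩ : H)
    rw [horder] at this
    exact even_iff_two_dvd.2 this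
  have hoddP₁ : ¬ Even P₁.ncard := by
    rw [hP₁def, Set.ncard_insert_of_notMem hg (Set.toFinite P)]
    simpa [Nat.even_add_one] using heven
  have hne : ¬ ((H : Set (Dih A)) ⊆ P₁) := by
    intro hsub
    have heq : P₁ = (H : Set (Dih A)) :=
      le_antisymm Subgroup.subset_closure hsub
    apply hoddP₁
    rw [heq]
    have : (H : Set (Dih A)).ncard = Nat.card H := (Nat.card_coe_set_eq _).symm
    rw [this]
    exact hcardH
  obtain ⟨h, hhH, hhP₁⟩ := Set.not_subset.1 hne
  refine ⟨h, hhP₁, ?_, ?_, ?_⟩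
  · -- Safe2
    intro k
    have hcomm : insert k (insert h P₁) = insert h (insert k P₁) := Set.insert_comm _ _ _
    have hmem : h ∈ Subgroup.closure (insert k P₁) :=
      Subgroup.closure_mono (Set.subset_insert _ _) hhH
    rw [hcomm, closure_insert_of_mem' hmem]
    exact hfin k
  · rw [Set.ncard_insert_of_notMem hhP₁ (Set.toFinite P₁), hP₁def,
      Set.ncard_insert_of_notMem hg (Set.toFinite P)]
    exact even_add_two' heven
  · intro _
    exact ⟨z, Subgroup.closure_mono (Set.subset_insert _ _) (hsubP hzmem), hz1, hzsq⟩

lemma inl_ne_one {z : A} (h : z ≠ 1) : DihInl A z ≠ 1 := by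
  intro hc
  exact h (SemidirectProduct.inl_injective (by rw [hc, map_one]))

lemma ncard_pair' {x y : Dih A} (h : x ≠ y) : ({x, y} : Set (Dih A)).ncard = 2 :=
  Set.ncard_pair h

lemma refl_sq {p : Dih A} (hp : p.right = τ) : p * p = 1 := by
  ext
  · rw [SemidirectProduct.mul_left, hp, twist_tau, mul_inv_cancel]; rfl
  · rw [SemidirectProduct.mul_right, hp, tau_mul_tau]; rfl

set_option maxHeartbeats 1000000 in
lemma move_base (hA : Even (Nat.card A)) (h2 : minGen A = 2) {g : Dih A}
    (hfin : ∀ k, Subgroup.closure (insert k ({g} : Set (Dih A))) ≠ ⊤) :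
    ∃ h ∉ ({g} : Set (Dih A)), GoodPos (insert h ({g} : Set (Dih A))) := by
  obtain ⟨z₀, hz₀1, hz₀sq⟩ := exists_invol hA
  by_cases hg1 : g = 1
  · subst hg1
    refine ⟨DihInl A z₀, ?_, ?_, ?_, ?_⟩
    · intro hc
      rw [Set.mem_singleton_iff] at hc
      exact inl_ne_one hz₀1 hc
    · intro k
      have hset : insert k (insert (DihInl A z₀) ({1} : Set (Dih A)))
          = insert 1 (insert k {DihInl A z₀}) := by
        rw [Set.pair_comm (DihInl A z₀) 1, Set.insert_comm]
      rw [hset, closure_insert_of_mem' (one_mem _)]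
      exact pair_closure_ne_top h2 k (DihInl A z₀)
    · rw [ncard_pair' (inl_ne_one hz₀1)]
      exact ⟨1, rfl⟩
    · intro _
      exact ⟨DihInl A z₀, Subgroup.subset_closure (Set.mem_insert _ _), inl_ne_one hz₀1,
        by rw [← map_mul, hz₀sq, map_one]⟩
  · by_cases hw : ∃ w ∈ Subgroup.closure ({g} : Set (Dih A)), w ≠ 1 ∧ w * w = 1
    · obtain ⟨w, hwmem, hw1, hwsq⟩ := hw
      refine ⟨1, ?_, ?_, ?_, ?_⟩
      · intro hc
        rw [Set.mem_singleton_iff] at hc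
        exact hg1 hc.symm
      · intro k
        rw [Set.insert_comm, closure_insert_of_mem' (one_mem _)]
        exact hfin k
      · rw [ncard_pair' (fun hc => hg1 hc.symm)]
        exact ⟨1, rfl⟩
      · intro _
        exact ⟨w, Subgroup.closure_mono (Set.subset_insert _ _) hwmem, hw1, hwsq⟩
    · push_neg at hw
      have hgr : g.right = 1 := by
        rcases rcases2 g.right with h | htau
        · exact h
        · exact absurd (refl_sq htau) (hw g (Subgroup.subset_closure (Set.mem_singleton g)) hg1)
      set a := g.left with ha
      have hga : DihInl A a = g := by
        ext
        · rfl
        · rw [hgr]; rfl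
      have hapos : 0 < orderOf a := orderOf_pos a
      have haodd : Odd (orderOf a) := by
        by_contra hev
        rw [Nat.not_odd_iff_even] at hev
        obtain ⟨m, hm⟩ := hev
        set n := orderOf a with hn
        have hm0 : m ≠ 0 := by omega
        have hwne : a ^ m ≠ 1 := by
          intro hcon
          have := orderOf_dvd_of_pow_eq_one hcon
          have := Nat.le_of_dvd (by omega) this
          omega
        refine hw (DihInl A (a ^ m)) ?_ (inl_ne_one hwne) ?_
        · have h3 : DihInl A (a ^ m) = g ^ m := hga ▸ map_pow (DihInl A) a m
          rw [h3]
          exact pow_mem (Subgroup.subset_closure (Set.mem_singleton g)) m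
        · rw [← map_mul, ← pow_add, ← hm, hn, pow_orderOf_eq_one, map_one]
      have hz₀a : z₀ ≠ a := by
        intro hcon
        apply hw g (Subgroup.subset_closure (Set.mem_singleton g)) hg1
        rw [← hga, ← map_mul, ← hcon, hz₀sq, map_one]
      set n := orderOf a with hn
      have hpowz : (a * z₀) ^ n = z₀ := by
        obtain ⟨m, hm⟩ := haodd
        rw [mul_pow, pow_orderOf_eq_one, one_mul, hm, pow_add, pow_mul, pow_two, hz₀sq,
          one_pow, one_mul, pow_one]
      have hamem : ∀ k : Dih A, DihInl A a ∈ Subgroup.closure ({DihInl A (a * z₀), k} : Set (Dih A)) := by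
        intro k
        have h1 : DihInl A (a * z₀) ∈ Subgroup.closure ({DihInl A (a * z₀), k} : Set (Dih A)) :=
          Subgroup.subset_closure (Set.mem_insert _ _)
        have h2 : DihInl A z₀ ∈ Subgroup.closure ({DihInl A (a * z₀), k} : Set (Dih A)) := by
          have : DihInl A z₀ = (DihInl A (a * z₀)) ^ n := by rw [← map_pow, hpowz]
          rw [this]
          exact pow_mem h1 n
        have : DihInl A a = DihInl A (a * z₀) * DihInl A z₀ := by
          rw [← map_mul, mul_assoc, hz₀sq, mul_one]
        rw [this]
        exact mul_mem h1 h2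
      refine ⟨DihInl A z₀, ?_, ?_, ?_, ?_⟩
      · intro hc
        rw [Set.mem_singleton_iff, ← hga] at hc
        exact hz₀a (SemidirectProduct.inl_injective hc)
      · intro k
        intro htop
        apply pair_closure_ne_top h2 (DihInl A (a * z₀)) k
        rw [eq_top_iff, ← htop, Subgroup.closure_le]
        rintro p (rfl | rfl | rfl)
        · exact Subgroup.subset_closure (Set.mem_insert_of_mem _ rfl)
        · have : DihInl A z₀ = (DihInl A (a * z₀)) ^ n := by rw [← map_pow, hpowz]
          rw [this]
          exact pow_mem (Subgroup.subset_closure (Set.mem_insert _ _)) n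
        · rw [← hga]
          exact hamem k
      · rw [ncard_pair' (fun hc => hz₀a (SemidirectProduct.inl_injective (hga ▸ hc)))]
        exact ⟨1, rfl⟩
      · intro _
        exact ⟨DihInl A z₀, Subgroup.subset_closure (Set.mem_insert _ _), inl_ne_one hz₀1,
          by rw [← map_mul, hz₀sq, map_one]⟩

open Classical in
lemma gameNim_eq {G : Type*} [Group G] [Fintype G] (P : Set G) :
    gameNim P = if Subgroup.closure P = ⊤ then 0
      else sInf {n : ℕ | ∀ g ∉ P, n ≠ gameNim (insert g P)} := by
  rw [gameNim]

lemma gameNim_of_top {G : Type*} [Group G] [Fintype G] {P : Set G}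
    (h : Subgroup.closure P = ⊤) : gameNim P = 0 := by
  rw [gameNim_eq, if_pos h]

lemma move_lemma (hA : Even (Nat.card A)) (h2 : minGen A = 2)
    {P : Set (Dih A)} (hG : GoodPos P) {g : Dih A} (hg : g ∉ P) :
    ∃ h ∉ insert g P,
      Subgroup.closure (insert h (insert g P)) = ⊤ ∨ GoodPos (insert h (insert g P)) := by
  obtain ⟨hsafe, heven, hinv⟩ := hG
  by_cases hfin : ∃ k, Subgroup.closure (insert k (insert g P)) = ⊤
  · obtain ⟨k, hk⟩ := hfin
    refine ⟨k, fun hmem => ?_, Or.inl hk⟩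
    rw [Set.insert_eq_self.2 hmem] at hk
    exact hsafe g hk
  · push_neg at hfin
    rcases P.eq_empty_or_nonempty with rfl | hP
    · have hsg : insert g (∅ : Set (Dih A)) = {g} := by simp
      rw [hsg] at hfin ⊢
      obtain ⟨h, hh, hgood⟩ := move_base hA h2 hfin
      exact ⟨h, hh, Or.inr hgood⟩
    · obtain ⟨h, hh, hgood⟩ := move_main hsafe heven hinv hP hg hfin
      exact ⟨h, hh, Or.inr hgood⟩

lemma nim_induction (hA : Even (Nat.card A)) (h2 : minGen A = 2) :
    ∀ N (P : Set (Dih A)), Fintype.card (Dih A) - P.ncard ≤ N → GoodPos P →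
      gameNim P = 0 ∧ ∀ g ∉ P, gameNim (insert g P) ≠ 0 := by
  intro N
  induction N with
  | zero =>
    intro P hcard hG
    exfalso
    have hPuniv : P = Set.univ := by
      by_contra hne
      have : P.ncard < (Set.univ : Set (Dih A)).ncard :=
        Set.ncard_lt_ncard ((Set.subset_univ P).ssubset_of_ne hne) Set.finite_univ
      rw [Set.ncard_univ, Nat.card_eq_fintype_card] at this
      omega
    exact hG.1.closure_ne_top (by rw [hPuniv]; exact Subgroup.closure_univ)
  | succ N ih =>
    intro P hcard hG
    have hB : ∀ g ∉ P, gameNim (insert g P) ≠ 0 := by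
      intro g hg
      obtain ⟨h, hh, hcase⟩ := move_lemma hA h2 hG hg
      have hne : Subgroup.closure (insert g P) ≠ ⊤ := hG.1 g
      have hQ0 : gameNim (insert h (insert g P)) = 0 := by
        rcases hcase with htop | hgood
        · exact gameNim_of_top htop
        · refine (ih (insert h (insert g P)) ?_ hgood).1
          have e1 : (insert g P).ncard = P.ncard + 1 :=
            Set.ncard_insert_of_notMem hg (Set.toFinite P)
          have e2 : (insert h (insert g P)).ncard = P.ncard + 2 := by
            rw [Set.ncard_insert_of_notMem hh (Set.toFinite (insert g P)), e1]
          have hle : (insert h (insert g P)).ncard ≤ Fintype.card (Dih A) := by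
            have := Set.ncard_le_ncard (Set.subset_univ (insert h (insert g P))) Set.finite_univ
            simpa [Set.ncard_univ, Nat.card_eq_fintype_card] using this
          omega
      rw [gameNim_eq, if_neg hne]
      intro hzero
      have hSne : {n : ℕ | ∀ k ∉ insert g P,
          n ≠ gameNim (insert k (insert g P))}.Nonempty := by
        refine ⟨(Finset.univ.sup fun k : Dih A => gameNim (insert k (insert g P))) + 1, ?_⟩
        intro k hk hcon
        have hle : gameNim (insert k (insert g P))
            ≤ Finset.univ.sup fun k : Dih A => gameNim (insert k (insert g P)) :=
          Finset.le_sup (f := fun k : Dih A => gameNim (insert k (insert g P))) (Finset.mem_univ k)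
        omega
      have hmem := Nat.sInf_mem hSne
      rw [hzero] at hmem
      exact hmem h hh hQ0.symm
    refine ⟨?_, hB⟩
    rw [gameNim_eq, if_neg hG.1.closure_ne_top]
    have h0 : 0 ∈ {n : ℕ | ∀ g ∉ P, n ≠ gameNim (insert g P)} :=
      fun g hg => (hB g hg).symm
    exact Nat.eq_zero_of_le_zero (Nat.sInf_le h0)


end Aux

/-- If `A` is a finite abelian group of even order with `d(A) = 2`, then the
nim-number of the achievement game `GEN(Dih(A))` is `0`. -/
theorem gameNim_dih_even_two_generated (A : Type*) [CommGroup A] [Fintype A]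
    (hA : Even (Nat.card A)) (h : minGen A = 2) :
    gameNim (∅ : Set (Dih A)) = 0 := by
  have hGood : GoodPos (∅ : Set (Dih A)) := by
    refine ⟨?_, by simp, fun hne => absurd hne (by simp)⟩
    intro g htop
    apply pair_closure_ne_top h g g
    rw [Set.pair_eq_singleton]
    simpa using htop
  exact (nim_induction hA h (Fintype.card (Dih A)) ∅ (by simp) hGood).1
end

section
/- Let A be a finite abelian group of odd order with d(A) = 2. Then the nim-number of the achievement game GEN(Dih(A)) is 3. -/
-- Part 1: basic lemmas
section Part1
variable {A : Type*} [CommGroup A]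

def sg : Multiplicative (ZMod 2) := Multiplicative.ofAdd 1

lemma c2_cases (k : Multiplicative (ZMod 2)) : k = 1 ∨ k = sg := by
  revert k; decide

lemma sg_ne_one : sg ≠ 1 := by decide
lemma sg_mul_sg : sg * sg = 1 := by decide
lemma sg_inv : sg⁻¹ = sg := by decide

lemma dihTwist_apply_one (a : A) : dihTwist A 1 a = a := by
  simp [dihTwist]

lemma dihTwist_apply_sg (a : A) : dihTwist A sg a = a⁻¹ := by
  have : (Multiplicative.toAdd sg) = 1 := rfl
  simp [dihTwist]; rw [if_neg sg_ne_one]; rfl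

/-- the reflection with coordinate `c` -/
def dref (c : A) : Dih A := ⟨c, sg⟩

lemma eq_inl_or_dref (x : Dih A) : x = DihInl A x.left ∨ x = dref x.left := by
  rcases c2_cases x.right with h | h
  · left; cases x; simp_all [dref]
  · right; cases x; simp_all [dref]

lemma dref_mul_dref (c b : A) : dref c * dref b = DihInl A (c * b⁻¹) := by
  show (⟨c, sg⟩ * ⟨b, sg⟩ : Dih A) = _
  rw [SemidirectProduct.mul_def]
  simp only [dihTwist_apply_sg, sg_mul_sg]
  rfl

lemma inl_mul_dref (m b : A) : DihInl A m * dref b = dref (m * b) := by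
  show (⟨m, 1⟩ * ⟨b, sg⟩ : Dih A) = _
  rw [SemidirectProduct.mul_def]
  simp only [dihTwist_apply_one, mul_one, one_mul, dref]

lemma dref_inv (c : A) : (dref c)⁻¹ = dref c := by
  have h := dref_mul_dref c c
  simp only [mul_inv_cancel] at h
  exact (eq_inv_of_mul_eq_one_left (by rw [h]; rfl)).symm

lemma dref_sq (c : A) : dref c * dref c = 1 := by
  rw [dref_mul_dref]; simp only [mul_inv_cancel]; rfl

lemma dref_ne_one (c : A) : dref c ≠ 1 := by
  intro h
  have : (dref c).right = (1 : Dih A).right := by rw [h]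
  exact sg_ne_one this

lemma rightHom_dref (c : A) : SemidirectProduct.rightHom (dref c) = sg := rfl

lemma dref_not_mem_ker (c : A) :
    dref c ∉ (SemidirectProduct.rightHom : Dih A →* Multiplicative (ZMod 2)).ker := by
  intro h
  rw [MonoidHom.mem_ker, rightHom_dref] at h
  exact sg_ne_one h

lemma inl_mem_ker (a : A) :
    DihInl A a ∈ (SemidirectProduct.rightHom : Dih A →* Multiplicative (ZMod 2)).ker := by
  rw [MonoidHom.mem_ker]; exact SemidirectProduct.rightHom_inl a

end Part1
-- Part 2: DihSub
section Part2
variable {A : Type*} [CommGroup A]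

open Subgroup

/-- The subgroup `M ∪ M·(dref b)` of `Dih A`. -/
def DihSub (M : Subgroup A) (b : A) : Subgroup (Dih A) where
  carrier := {x | x.left * (if x.right = 1 then 1 else b⁻¹) ∈ M}
  one_mem' := by
    simp only [Set.mem_setOf_eq, SemidirectProduct.one_left, SemidirectProduct.one_right,
      eq_self_iff_true, ite_true, mul_one]
    exact one_mem M
  mul_mem' := by
    intro x y hx hy
    simp only [Set.mem_setOf_eq] at *
    rcases c2_cases x.right with hxr | hxr <;> rcases c2_cases y.right with hyr | hyr <;>
      simp only [SemidirectProduct.mul_left, SemidirectProduct.mul_right, hxr, hyr,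
        dihTwist_apply_one, dihTwist_apply_sg, one_mul, mul_one, sg_mul_sg,
        eq_self_iff_true, ite_true, if_neg sg_ne_one] at *
    · exact mul_mem hx hy
    · rw [mul_assoc]; exact mul_mem hx hy
    · have : x.left * y.left⁻¹ * b⁻¹ = (x.left * b⁻¹) * y.left⁻¹ := by
        rw [mul_right_comm]
      rw [this]; exact mul_mem hx (inv_mem hy)
    · have : x.left * y.left⁻¹ = (x.left * b⁻¹) * (y.left * b⁻¹)⁻¹ := by group
      rw [this]; exact mul_mem hx (inv_mem hy)
  inv_mem' := by
    intro x hx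
    simp only [Set.mem_setOf_eq] at *
    rcases c2_cases x.right with hxr | hxr <;>
      simp only [SemidirectProduct.inv_left, SemidirectProduct.inv_right, hxr, inv_one, sg_inv,
        dihTwist_apply_one, dihTwist_apply_sg, one_mul, mul_one, inv_inv,
        eq_self_iff_true, ite_true, if_neg sg_ne_one] at *
    · exact inv_mem hx
    · exact hx

lemma mem_DihSub {M : Subgroup A} {b : A} {x : Dih A} :
    x ∈ DihSub M b ↔ x.left * (if x.right = 1 then 1 else b⁻¹) ∈ M := Iff.rfl

lemma inl_mem_DihSub_iff {M : Subgroup A} {b a : A} : DihInl A a ∈ DihSub M b ↔ a ∈ M := by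
  simp [mem_DihSub, SemidirectProduct.left_inl, SemidirectProduct.right_inl]

lemma dref_mem_DihSub_iff {M : Subgroup A} {b c : A} : dref c ∈ DihSub M b ↔ c * b⁻¹ ∈ M := by
  simp [mem_DihSub, dref, if_neg sg_ne_one]

lemma dref_mem_DihSub {M : Subgroup A} (b : A) : dref b ∈ DihSub M b := by
  rw [dref_mem_DihSub_iff, mul_inv_cancel]; exact one_mem M

lemma map_inl_le_DihSub {M : Subgroup A} {b : A} : M.map (DihInl A) ≤ DihSub M b := by
  rintro x ⟨a, ha, rfl⟩
  exact inl_mem_DihSub_iff.2 ha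

lemma DihSub_mono {M N : Subgroup A} {b : A} (h : M ≤ N) : DihSub M b ≤ DihSub N b := by
  intro x hx
  exact h hx

lemma DihSub_le {M : Subgroup A} {b : A} {K : Subgroup (Dih A)}
    (h1 : ∀ m ∈ M, DihInl A m ∈ K) (h2 : dref b ∈ K) : DihSub M b ≤ K := by
  intro x hx
  rcases eq_inl_or_dref x with hx' | hx'
  · rw [hx'] at hx ⊢
    exact h1 _ (inl_mem_DihSub_iff.1 hx)
  · rw [hx'] at hx ⊢
    have hm : x.left * b⁻¹ ∈ M := dref_mem_DihSub_iff.1 hx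
    have : dref x.left = DihInl A (x.left * b⁻¹) * dref b := by
      rw [inl_mul_dref, inv_mul_cancel_right]
    rw [this]
    exact mul_mem (h1 _ hm) h2

lemma comap_DihSub {M : Subgroup A} {b : A} : (DihSub M b).comap (DihInl A) = M := by
  ext a; exact inl_mem_DihSub_iff

lemma DihSub_eq_top_iff {M : Subgroup A} {b : A} : DihSub M b = ⊤ ↔ M = ⊤ := by
  constructor
  · intro h
    rw [← comap_DihSub (M := M) (b := b), h]
    ext a; simp [Subgroup.mem_comap]
  · intro h
    ext x
    simp only [Subgroup.mem_top, iff_true, mem_DihSub, h]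

lemma DihSub_not_le_ker {M : Subgroup A} {b : A} :
    ¬ (DihSub M b ≤ (SemidirectProduct.rightHom : Dih A →* Multiplicative (ZMod 2)).ker) := by
  intro h
  exact dref_not_mem_ker b (h (dref_mem_DihSub b))

lemma map_inl_le_ker (M : Subgroup A) :
    M.map (DihInl A) ≤ (SemidirectProduct.rightHom : Dih A →* Multiplicative (ZMod 2)).ker := by
  rintro x ⟨a, _, rfl⟩
  exact inl_mem_ker a

lemma map_inl_ne_top (M : Subgroup A) : M.map (DihInl A) ≠ ⊤ := by
  intro h
  have : dref 1 ∈ M.map (DihInl A) := h ▸ Subgroup.mem_top _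
  exact dref_not_mem_ker 1 (map_inl_le_ker M this)

lemma comap_map_inl (M : Subgroup A) : (M.map (DihInl A)).comap (DihInl A) = M :=
  Subgroup.comap_map_eq_self_of_injective SemidirectProduct.inl_injective M

-- closure/sup computations
lemma sup_closure_singleton_le_iff {G : Type*} [Group G] {H K : Subgroup G} {g : G} :
    H ⊔ Subgroup.closure {g} ≤ K ↔ H ≤ K ∧ g ∈ K := by
  rw [sup_le_iff, Subgroup.closure_le, Set.singleton_subset_iff]; rfl

lemma map_inl_sup_inl (M : Subgroup A) (a : A) :
    M.map (DihInl A) ⊔ Subgroup.closure {DihInl A a} = (M ⊔ Subgroup.closure {a}).map (DihInl A) := by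
  rw [Subgroup.map_sup, MonoidHom.map_closure, Set.image_singleton]

lemma map_inl_sup_dref (M : Subgroup A) (c : A) :
    M.map (DihInl A) ⊔ Subgroup.closure {dref c} = DihSub M c := by
  apply le_antisymm
  · rw [sup_closure_singleton_le_iff]
    exact ⟨map_inl_le_DihSub, dref_mem_DihSub c⟩
  · apply DihSub_le
    · intro m hm
      exact le_sup_left (α := Subgroup (Dih A)) ⟨m, hm, rfl⟩
    · exact le_sup_right (α := Subgroup (Dih A)) (Subgroup.mem_closure_singleton_self _)

lemma DihSub_sup_inl (M : Subgroup A) (b a : A) :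
    DihSub M b ⊔ Subgroup.closure {DihInl A a} = DihSub (M ⊔ Subgroup.closure {a}) b := by
  apply le_antisymm
  · rw [sup_closure_singleton_le_iff]
    constructor
    · exact DihSub_mono le_sup_left
    · exact inl_mem_DihSub_iff.2 (le_sup_right (α := Subgroup A) (Subgroup.mem_closure_singleton_self _))
  · have hsub : M ⊔ Subgroup.closure {a} ≤
        Subgroup.comap (DihInl A) (DihSub M b ⊔ Subgroup.closure {DihInl A a}) := by
      apply sup_le
      · intro m hm
        exact le_sup_left (α := Subgroup (Dih A)) (inl_mem_DihSub_iff.2 hm)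
      · rw [Subgroup.closure_le, Set.singleton_subset_iff]
        exact le_sup_right (α := Subgroup (Dih A)) (Subgroup.mem_closure_singleton_self _)
    apply DihSub_le
    · intro m hm
      exact hsub hm
    · exact le_sup_left (α := Subgroup (Dih A)) (dref_mem_DihSub b)

lemma DihSub_sup_dref (M : Subgroup A) (b c : A) :
    DihSub M b ⊔ Subgroup.closure {dref c} = DihSub (M ⊔ Subgroup.closure {c * b⁻¹}) b := by
  apply le_antisymm
  · rw [sup_closure_singleton_le_iff]
    constructor
    · exact DihSub_mono le_sup_left
    · rw [dref_mem_DihSub_iff]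
      exact le_sup_right (α := Subgroup A) (Subgroup.mem_closure_singleton_self _)
  · have hsub : M ⊔ Subgroup.closure {c * b⁻¹} ≤
        Subgroup.comap (DihInl A) (DihSub M b ⊔ Subgroup.closure {dref c}) := by
      apply sup_le
      · intro m hm
        exact le_sup_left (α := Subgroup (Dih A)) (inl_mem_DihSub_iff.2 hm)
      · rw [Subgroup.closure_le, Set.singleton_subset_iff]
        have hmem : DihInl A (c * b⁻¹) ∈ DihSub M b ⊔ Subgroup.closure {dref c} := by
          rw [(by exact (dref_mul_dref c b).symm : DihInl A (c * b⁻¹) = dref c * dref b)]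
          exact mul_mem
            (le_sup_right (α := Subgroup (Dih A)) (Subgroup.mem_closure_singleton_self _))
            (le_sup_left (α := Subgroup (Dih A)) (dref_mem_DihSub b))
        exact SetLike.mem_coe.2 (Subgroup.mem_comap.2 hmem)
    apply DihSub_le
    · intro m hm
      exact hsub hm
    · exact le_sup_left (α := Subgroup (Dih A)) (dref_mem_DihSub b)

lemma eq_map_inl_of_le_ker {H : Subgroup (Dih A)}
    (h : H ≤ (SemidirectProduct.rightHom : Dih A →* Multiplicative (ZMod 2)).ker) :
    H = (H.comap (DihInl A)).map (DihInl A) := by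
  apply le_antisymm
  · intro x hx
    have hr : x.right = 1 := h hx
    rcases eq_inl_or_dref x with hx' | hx'
    · exact ⟨x.left, SetLike.mem_coe.2 (Subgroup.mem_comap.2 (hx' ▸ hx)), hx'.symm⟩
    · exfalso
      have : x.right = sg := by rw [hx']; rfl
      exact sg_ne_one (this ▸ hr)
  · rintro x ⟨a, ha, rfl⟩
    exact ha

lemma eq_DihSub_of_not_le_ker {H : Subgroup (Dih A)}
    (h : ¬ H ≤ (SemidirectProduct.rightHom : Dih A →* Multiplicative (ZMod 2)).ker) :
    ∃ b : A, dref b ∈ H ∧ H = DihSub (H.comap (DihInl A)) b := by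
  have h' : ∃ x ∈ H, x ∉ (SemidirectProduct.rightHom : Dih A →* Multiplicative (ZMod 2)).ker := by
    by_contra hc
    push_neg at hc
    exact h fun x hx => hc x hx
  obtain ⟨x, hxH, hxk⟩ := h'
  have hxr : x.right = sg := by
    rcases c2_cases x.right with h1 | h1
    · exact absurd (MonoidHom.mem_ker.2 h1) hxk
    · exact h1
  have hxd : x = dref x.left := by
    rcases eq_inl_or_dref x with h1 | h1
    · exfalso
      have : x.right = (1 : Multiplicative (ZMod 2)) := by rw [h1]; rfl
      exact sg_ne_one (hxr ▸ this)
    · exact h1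
  refine ⟨x.left, hxd ▸ hxH, ?_⟩
  apply le_antisymm
  · intro y hy
    rcases eq_inl_or_dref y with hy' | hy'
    · rw [hy']
      exact inl_mem_DihSub_iff.2 (by rw [Subgroup.mem_comap, ← hy']; exact hy)
    · rw [hy', dref_mem_DihSub_iff]
      rw [Subgroup.mem_comap]
      have : DihInl A (y.left * x.left⁻¹) = dref y.left * dref x.left := (dref_mul_dref _ _).symm
      rw [this]
      exact mul_mem (hy' ▸ hy) (hxd ▸ hxH)
  · apply DihSub_le
    · intro m hm
      exact hm
    · exact hxd ▸ hxH

end Part2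
-- Part 3: deficiency
section Part3
variable {A : Type*} [CommGroup A] [Fintype A]

open Subgroup

/-- deficiency of a subgroup of `A` -/
noncomputable def dA (M : Subgroup A) : ℕ :=
  sInf {n : ℕ | ∃ Q : Finset A, Q.card = n ∧ M ⊔ Subgroup.closure (↑Q : Set A) = ⊤}

lemma dA_set_nonempty (M : Subgroup A) :
    {n : ℕ | ∃ Q : Finset A, Q.card = n ∧ M ⊔ Subgroup.closure (↑Q : Set A) = ⊤}.Nonempty := by
  refine ⟨(Finset.univ : Finset A).card, Finset.univ, rfl, ?_⟩
  rw [Finset.coe_univ, Subgroup.closure_univ]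
  exact sup_top_eq M

lemma dA_spec (M : Subgroup A) :
    ∃ Q : Finset A, Q.card = dA M ∧ M ⊔ Subgroup.closure (↑Q : Set A) = ⊤ :=
  Nat.sInf_mem (dA_set_nonempty M)

lemma dA_le (M : Subgroup A) (Q : Finset A) (h : M ⊔ Subgroup.closure (↑Q : Set A) = ⊤) :
    dA M ≤ Q.card :=
  Nat.sInf_le ⟨Q, rfl, h⟩

lemma dA_eq_zero_iff (M : Subgroup A) : dA M = 0 ↔ M = ⊤ := by
  constructor
  · intro h
    obtain ⟨Q, hQ, htop⟩ := dA_spec M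
    rw [h, Finset.card_eq_zero] at hQ
    rw [hQ] at htop
    simpa using htop
  · intro h
    have : dA M ≤ (∅ : Finset A).card := dA_le M ∅ (by simp [h])
    simpa using this

lemma dA_le_two (h2 : minGen A = 2) (M : Subgroup A) : dA M ≤ 2 := by
  have hne : {n : ℕ | ∃ S : Finset A, S.card = n ∧ Subgroup.closure (S : Set A) = ⊤}.Nonempty := by
    refine ⟨(Finset.univ : Finset A).card, Finset.univ, rfl, ?_⟩
    rw [Finset.coe_univ, Subgroup.closure_univ]
  have := Nat.sInf_mem hne
  rw [show sInf {n : ℕ | ∃ S : Finset A, S.card = n ∧ Subgroup.closure (S : Set A) = ⊤} = minGen A from rfl, h2] at this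
  obtain ⟨S, hS, htop⟩ := this
  have := dA_le M S (by rw [htop]; exact sup_top_eq M)
  omega

lemma dA_mono {M N : Subgroup A} (h : M ≤ N) : dA N ≤ dA M := by
  obtain ⟨Q, hQ, htop⟩ := dA_spec M
  have : N ⊔ Subgroup.closure (↑Q : Set A) = ⊤ := by
    rw [eq_top_iff, ← htop]
    exact sup_le_sup_right h _
  have := dA_le N Q this
  omega

lemma dA_sup_single (M : Subgroup A) (a : A) :
    dA M ≤ dA (M ⊔ Subgroup.closure {a}) + 1 := by
  classical
  obtain ⟨Q, hQ, htop⟩ := dA_spec (M ⊔ Subgroup.closure {a})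
  have h : M ⊔ Subgroup.closure (↑(insert a Q) : Set A) = ⊤ := by
    rw [eq_top_iff, ← htop]
    rw [Finset.coe_insert, Set.insert_eq, Subgroup.closure_union, sup_assoc]
  have := dA_le M (insert a Q) h
  have hcard : (insert a Q).card ≤ Q.card + 1 := Finset.card_insert_le a Q
  omega

lemma dA_exists_succ {M : Subgroup A} (h : dA M ≠ 0) :
    ∃ a : A, a ∉ M ∧ dA (M ⊔ Subgroup.closure {a}) + 1 = dA M := by
  classical
  obtain ⟨Q, hQ, htop⟩ := dA_spec M
  have hMne : M ≠ ⊤ := fun hM => h ((dA_eq_zero_iff M).2 hM)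
  have hQM : ∃ a ∈ Q, a ∉ M := by
    by_contra hc
    push_neg at hc
    have : Subgroup.closure (↑Q : Set A) ≤ M := by
      rw [Subgroup.closure_le]
      intro x hx
      exact hc x hx
    have : M ⊔ Subgroup.closure (↑Q : Set A) = M := sup_eq_left.2 this
    exact hMne (by rw [← this, htop])
  obtain ⟨a, haQ, haM⟩ := hQM
  refine ⟨a, haM, ?_⟩
  have hupper : dA (M ⊔ Subgroup.closure {a}) ≤ (Q.erase a).card := by
    apply dA_le
    rw [eq_top_iff, ← htop]
    apply sup_le
    · exact le_trans le_sup_left le_sup_left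
    · rw [Subgroup.closure_le]
      intro x hx
      rcases eq_or_ne x a with rfl | hxa
      · exact SetLike.mem_coe.2
          (le_sup_left (α := Subgroup A)
            (le_sup_right (α := Subgroup A) (Subgroup.mem_closure_singleton_self x)))
      · have hxQ : x ∈ Q.erase a := Finset.mem_erase.2 ⟨hxa, Finset.mem_coe.1 hx⟩
        exact SetLike.mem_coe.2
          (le_sup_right (α := Subgroup A) (Subgroup.subset_closure (Finset.mem_coe.2 hxQ)))
  have hlower := dA_sup_single M a
  have hcard : (Q.erase a).card = Q.card - 1 := Finset.card_erase_of_mem haQ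
  omega

lemma dA_bot (h2 : minGen A = 2) : dA (⊥ : Subgroup A) = 2 := by
  have : ∀ Q : Finset A, (⊥ : Subgroup A) ⊔ Subgroup.closure (↑Q : Set A) = ⊤ ↔
      Subgroup.closure (↑Q : Set A) = ⊤ := by
    intro Q
    rw [bot_sup_eq]
  unfold dA
  rw [show {n : ℕ | ∃ Q : Finset A, Q.card = n ∧ (⊥ : Subgroup A) ⊔ Subgroup.closure (↑Q : Set A) = ⊤}
      = {n : ℕ | ∃ S : Finset A, S.card = n ∧ Subgroup.closure (S : Set A) = ⊤} from by
    ext n; simp only [Set.mem_setOf_eq, bot_sup_eq]]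
  exact h2

end Part3
-- Part 4: values
section Part4
variable {A : Type*} [CommGroup A] [Fintype A]

open Subgroup

def vR (m : ℕ) (q : Bool) : ℕ :=
  if m = 0 then (if q then 2 else 1)
  else if m = 1 then (if q then 3 else 0) else (if q then 3 else 1)

def vD (m : ℕ) (q : Bool) : ℕ :=
  if m = 0 then 0 else if m = 1 then (if q then 1 else 2) else (if q then 0 else 2)

lemma num_RR {m m' : ℕ} (q : Bool) (h2 : m ≤ 2) (h1 : m' ≤ m) (h3 : m ≤ m' + 1) :
    vR m' (!q) ≠ vR m q := by
  interval_cases m <;> interval_cases m' <;> cases q <;> simp [vR] <;> omega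

lemma num_RD {m : ℕ} (q : Bool) (h2 : m ≤ 2) : vD m (!q) ≠ vR m q := by
  interval_cases m <;> cases q <;> simp [vR, vD]

lemma num_DD {m m' : ℕ} (q : Bool) (h2 : m ≤ 2) (h0 : 1 ≤ m) (h1 : m' ≤ m) (h3 : m ≤ m' + 1) :
    vD m' (!q) ≠ vD m q := by
  interval_cases m <;> interval_cases m' <;> cases q <;> simp [vD] <;> omega

open Classical in
noncomputable def Fval (K : Subgroup (Dih A)) (q : Bool) : ℕ :=
  if K = ⊤ then 0
  else if K ≤ (SemidirectProduct.rightHom : Dih A →* Multiplicative (ZMod 2)).ker then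
    vR (dA (K.comap (DihInl A))) q
  else vD (dA (K.comap (DihInl A))) q

lemma Fval_top (q : Bool) : Fval (⊤ : Subgroup (Dih A)) q = 0 := by
  rw [Fval, if_pos rfl]

lemma Fval_map_inl (N : Subgroup A) (q : Bool) : Fval (N.map (DihInl A)) q = vR (dA N) q := by
  rw [Fval, if_neg (map_inl_ne_top N), if_pos (map_inl_le_ker N), comap_map_inl]

lemma Fval_DihSub (N : Subgroup A) (b : A) (q : Bool) : Fval (DihSub N b) q = vD (dA N) q := by
  by_cases hN : N = ⊤
  · rw [DihSub_eq_top_iff.2 hN, Fval_top, hN, vD, if_pos ((dA_eq_zero_iff _).2 rfl)]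
  · rw [Fval, if_neg (fun h => hN (DihSub_eq_top_iff.1 h)), if_neg DihSub_not_le_ker, comap_DihSub]

noncomputable def nuv (P : Set (Dih A)) : ℕ :=
  Fval (Subgroup.closure P) (decide (P.ncard % 2 = 0))

lemma parity_flip (n : ℕ) : decide ((n + 1) % 2 = 0) = !decide (n % 2 = 0) := by
  rcases Nat.mod_two_eq_zero_or_one n with h | h <;> simp [Nat.add_mod, h]

lemma nuv_insert {P : Set (Dih A)} {g : Dih A} (hg : g ∉ P) :
    nuv (insert g P) =
      Fval (Subgroup.closure P ⊔ Subgroup.closure {g}) (!decide (P.ncard % 2 = 0)) := by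
  rw [nuv, Set.ncard_insert_of_notMem hg (Set.toFinite P), parity_flip]
  congr 1
  rw [Set.insert_eq, Subgroup.closure_union, sup_comm]

lemma sup_closure_of_mem {H : Subgroup (Dih A)} {g : Dih A} (hg : g ∈ H) :
    H ⊔ Subgroup.closure {g} = H :=
  sup_eq_left.2 (by rw [Subgroup.closure_le, Set.singleton_subset_iff]; exact hg)

lemma ncard_coe_subgroup (H : Subgroup (Dih A)) :
    (↑H : Set (Dih A)).ncard = Nat.card H :=
  (Nat.card_coe_set_eq _).symm

lemma odd_ncard_map_inl (hA : Odd (Nat.card A)) (M : Subgroup A) :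
    (↑(M.map (DihInl A)) : Set (Dih A)).ncard % 2 = 1 := by
  rw [ncard_coe_subgroup]
  have h1 : Nat.card (M.map (DihInl A)) = Nat.card M :=
    (Nat.card_congr (Subgroup.equivMapOfInjective M _ SemidirectProduct.inl_injective).toEquiv).symm
  have h2 : Nat.card M ∣ Nat.card A := Subgroup.card_subgroup_dvd_card M
  rw [h1, ← Nat.odd_iff]
  rcases Nat.even_or_odd (Nat.card M) with he | ho
  · exfalso
    have : (2 : ℕ) ∣ Nat.card A := dvd_trans (even_iff_two_dvd.mp he) h2
    rw [Nat.odd_iff] at hA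
    omega
  · exact ho

lemma even_ncard_DihSub (M : Subgroup A) (b : A) :
    (↑(DihSub M b) : Set (Dih A)).ncard % 2 = 0 := by
  rw [ncard_coe_subgroup]
  haveI : Fact (Nat.Prime 2) := ⟨Nat.prime_two⟩
  have hord : orderOf (dref b : Dih A) = 2 :=
    orderOf_eq_prime (by rw [pow_two]; exact dref_sq b) (dref_ne_one b)
  have hy : orderOf ((⟨dref b, dref_mem_DihSub b⟩ : DihSub M b)) = 2 := by
    have h := orderOf_injective (DihSub M b).subtype (Subgroup.subtype_injective _)
      (⟨dref b, dref_mem_DihSub b⟩ : DihSub M b)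
    exact h.symm.trans hord
  have hdvd : (2 : ℕ) ∣ Nat.card (DihSub M b) := by
    have h := orderOf_dvd_natCard (⟨dref b, dref_mem_DihSub b⟩ : DihSub M b)
    rwa [hy] at h
  omega

lemma exists_stay {H : Subgroup (Dih A)} {P : Set (Dih A)} (hP : P ⊆ ↑H)
    (hne : P.ncard ≠ (↑H : Set (Dih A)).ncard) : ∃ g ∈ (↑H : Set (Dih A)), g ∉ P := by
  apply Set.exists_of_ssubset
  exact ⟨hP, fun h => hne (by rw [Set.Subset.antisymm hP h])⟩

end Part4
-- Part 5: option lemmas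
section Part5
variable {A : Type*} [CommGroup A] [Fintype A]

open Subgroup

lemma opt_ne (h2 : minGen A = 2) {H : Subgroup (Dih A)} (hH : H ≠ ⊤) (g : Dih A) (q : Bool) :
    Fval (H ⊔ Subgroup.closure {g}) (!q) ≠ Fval H q := by
  by_cases ht : H ≤ (SemidirectProduct.rightHom : Dih A →* Multiplicative (ZMod 2)).ker
  · have hrepr : H = (H.comap (DihInl A)).map (DihInl A) := eq_map_inl_of_le_ker ht
    set M := H.comap (DihInl A) with hMdef
    rcases eq_inl_or_dref g with hg | hg
    · rw [hrepr, hg, map_inl_sup_inl, Fval_map_inl, Fval_map_inl]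
      exact num_RR q (dA_le_two h2 M) (dA_mono le_sup_left) (dA_sup_single M _)
    · rw [hrepr, hg, map_inl_sup_dref, Fval_DihSub, Fval_map_inl]
      exact num_RD q (dA_le_two h2 M)
  · obtain ⟨b, hbH, hrepr⟩ := eq_DihSub_of_not_le_ker ht
    set M := H.comap (DihInl A) with hMdef
    have hm0 : dA M ≠ 0 := by
      intro h0
      apply hH
      rw [hrepr, (dA_eq_zero_iff M).1 h0]
      exact DihSub_eq_top_iff.2 rfl
    rcases eq_inl_or_dref g with hg | hg
    · rw [hrepr, hg, DihSub_sup_inl, Fval_DihSub, Fval_DihSub]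
      exact num_DD q (dA_le_two h2 M) (by omega) (dA_mono le_sup_left) (dA_sup_single M _)
    · rw [hrepr, hg, DihSub_sup_dref, Fval_DihSub, Fval_DihSub]
      exact num_DD q (dA_le_two h2 M) (by omega) (dA_mono le_sup_left) (dA_sup_single M _)

lemma opt_ex (hA : Odd (Nat.card A)) (h2 : minGen A = 2) {P : Set (Dih A)}
    (hH : Subgroup.closure P ≠ ⊤) {k : ℕ} (hk : k < nuv P) :
    ∃ g, g ∉ P ∧ nuv (insert g P) = k := by
  set H := Subgroup.closure P with hHdef
  have hPH : P ⊆ ↑H := Subgroup.subset_closure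
  by_cases ht : H ≤ (SemidirectProduct.rightHom : Dih A →* Multiplicative (ZMod 2)).ker
  · -- rotation case
    have hrepr : H = (H.comap (DihInl A)).map (DihInl A) := eq_map_inl_of_le_ker ht
    set M := H.comap (DihInl A) with hMdef
    have hval : nuv P = vR (dA M) (decide (P.ncard % 2 = 0)) := by
      rw [nuv, ← hHdef, hrepr, Fval_map_inl]
    set m := dA M with hmdef
    have hm2 : m ≤ 2 := dA_le_two h2 M
    have refl_move : ∀ c : A, dref c ∉ P ∧
        nuv (insert (dref c) P) = vD m (!decide (P.ncard % 2 = 0)) := by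
      intro c
      have hcP : dref c ∉ P := fun hc => dref_not_mem_ker c (ht (hPH hc))
      refine ⟨hcP, ?_⟩
      rw [nuv_insert hcP, ← hHdef, hrepr, map_inl_sup_dref, Fval_DihSub]
    have inl_move : ∀ a : A, a ∉ M →
        (DihInl A a ∉ P ∧
          nuv (insert (DihInl A a) P)
            = vR (dA (M ⊔ Subgroup.closure {a})) (!decide (P.ncard % 2 = 0))) := by
      intro a haM
      have haP : DihInl A a ∉ P := by
        intro hc
        have h' : DihInl A a ∈ H := hPH hc
        exact haM (Subgroup.mem_comap.2 h')
      refine ⟨haP, ?_⟩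
      rw [nuv_insert haP, ← hHdef, hrepr, map_inl_sup_inl, Fval_map_inl]
    have stay_move : P.ncard % 2 = 0 →
        ∃ g, g ∉ P ∧ nuv (insert g P) = vR m (!decide (P.ncard % 2 = 0)) := by
      intro hp
      have hodd : (↑H : Set (Dih A)).ncard % 2 = 1 := by
        rw [hrepr]; exact odd_ncard_map_inl hA M
      obtain ⟨g, hgH, hgP⟩ := exists_stay hPH (by omega)
      refine ⟨g, hgP, ?_⟩
      rw [nuv_insert hgP, ← hHdef, sup_closure_of_mem hgH, hrepr, Fval_map_inl]
    have drop_move : m ≠ 0 →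
        ∃ g, g ∉ P ∧ nuv (insert g P) = vR (m - 1) (!decide (P.ncard % 2 = 0)) := by
      intro hm0
      obtain ⟨a, haM, hd⟩ := dA_exists_succ (M := M) (by rw [← hmdef]; exact hm0)
      obtain ⟨haP, hval'⟩ := inl_move a haM
      exact ⟨_, haP, by rw [hval']; congr 1; omega⟩
    rw [hval] at hk
    have hm012 : m = 0 ∨ m = 1 ∨ m = 2 := by omega
    by_cases hq : P.ncard % 2 = 0
    · have hqd : decide (P.ncard % 2 = 0) = true := decide_eq_true hq
      rw [hqd] at hk
      rcases hm012 with hm | hm | hm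
      · have hk2 : k = 0 ∨ k = 1 := by rw [hm] at hk; simp [vR] at hk; omega
        rcases hk2 with rfl | rfl
        · obtain ⟨hcP, hval'⟩ := refl_move 1
          exact ⟨_, hcP, by rw [hval', hm, hqd]; rfl⟩
        · obtain ⟨g, hgP, hval'⟩ := stay_move hq
          exact ⟨g, hgP, by rw [hval', hm, hqd]; rfl⟩
      · have hk3 : k = 0 ∨ k = 1 ∨ k = 2 := by rw [hm] at hk; simp [vR] at hk; omega
        rcases hk3 with rfl | rfl | rfl
        · obtain ⟨g, hgP, hval'⟩ := stay_move hq
          exact ⟨g, hgP, by rw [hval', hm, hqd]; rfl⟩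
        · obtain ⟨g, hgP, hval'⟩ := drop_move (by omega)
          exact ⟨g, hgP, by rw [hval', hm, hqd]; rfl⟩
        · obtain ⟨hcP, hval'⟩ := refl_move 1
          exact ⟨_, hcP, by rw [hval', hm, hqd]; rfl⟩
      · have hk3 : k = 0 ∨ k = 1 ∨ k = 2 := by rw [hm] at hk; simp [vR] at hk; omega
        rcases hk3 with rfl | rfl | rfl
        · obtain ⟨g, hgP, hval'⟩ := drop_move (by omega)
          exact ⟨g, hgP, by rw [hval', hm, hqd]; rfl⟩
        · obtain ⟨g, hgP, hval'⟩ := stay_move hq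
          exact ⟨g, hgP, by rw [hval', hm, hqd]; rfl⟩
        · obtain ⟨hcP, hval'⟩ := refl_move 1
          exact ⟨_, hcP, by rw [hval', hm, hqd]; rfl⟩
    · have hqd : decide (P.ncard % 2 = 0) = false := decide_eq_false hq
      rw [hqd] at hk
      rcases hm012 with hm | hm | hm
      · have hk1 : k = 0 := by rw [hm] at hk; simp [vR] at hk; omega
        subst hk1
        obtain ⟨hcP, hval'⟩ := refl_move 1
        exact ⟨_, hcP, by rw [hval', hm, hqd]; rfl⟩
      · exfalso; rw [hm] at hk; simp [vR] at hk
      · have hk1 : k = 0 := by rw [hm] at hk; simp [vR] at hk; omega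
        subst hk1
        obtain ⟨hcP, hval'⟩ := refl_move 1
        exact ⟨_, hcP, by rw [hval', hm, hqd]; rfl⟩
  · -- dihedral case
    obtain ⟨b, hbH, hrepr⟩ := eq_DihSub_of_not_le_ker ht
    set M := H.comap (DihInl A) with hMdef
    have hval : nuv P = vD (dA M) (decide (P.ncard % 2 = 0)) := by
      rw [nuv, ← hHdef, hrepr, Fval_DihSub]
    set m := dA M with hmdef
    have hm2 : m ≤ 2 := dA_le_two h2 M
    have hm0 : m ≠ 0 := by
      intro h0
      apply hH
      rw [hrepr, (dA_eq_zero_iff M).1 (by rw [← hmdef]; exact h0)]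
      exact DihSub_eq_top_iff.2 rfl
    have inl_move : ∀ a : A, a ∉ M →
        (DihInl A a ∉ P ∧
          nuv (insert (DihInl A a) P)
            = vD (dA (M ⊔ Subgroup.closure {a})) (!decide (P.ncard % 2 = 0))) := by
      intro a haM
      have haP : DihInl A a ∉ P := by
        intro hc
        have h' : DihInl A a ∈ H := hPH hc
        exact haM (Subgroup.mem_comap.2 h')
      refine ⟨haP, ?_⟩
      rw [nuv_insert haP, ← hHdef, hrepr, DihSub_sup_inl, Fval_DihSub]
    have drop_move : ∃ g, g ∉ P ∧
        nuv (insert g P) = vD (m - 1) (!decide (P.ncard % 2 = 0)) := by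
      obtain ⟨a, haM, hd⟩ := dA_exists_succ (M := M) (by rw [← hmdef]; exact hm0)
      obtain ⟨haP, hval'⟩ := inl_move a haM
      exact ⟨_, haP, by rw [hval']; congr 1; omega⟩
    have stay_move : P.ncard % 2 = 1 →
        ∃ g, g ∉ P ∧ nuv (insert g P) = vD m (!decide (P.ncard % 2 = 0)) := by
      intro hp
      have heven : (↑H : Set (Dih A)).ncard % 2 = 0 := by
        rw [hrepr]; exact even_ncard_DihSub M b
      obtain ⟨g, hgH, hgP⟩ := exists_stay hPH (by omega)
      refine ⟨g, hgP, ?_⟩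
      rw [nuv_insert hgP, ← hHdef, sup_closure_of_mem hgH, hrepr, Fval_DihSub]
    rw [hval] at hk
    have hm12 : m = 1 ∨ m = 2 := by omega
    by_cases hq : P.ncard % 2 = 0
    · have hqd : decide (P.ncard % 2 = 0) = true := decide_eq_true hq
      rw [hqd] at hk
      rcases hm12 with hm | hm
      · have hk1 : k = 0 := by rw [hm] at hk; simp [vD] at hk; omega
        subst hk1
        obtain ⟨g, hgP, hval'⟩ := drop_move
        exact ⟨g, hgP, by rw [hval', hm, hqd]; rfl⟩
      · exfalso; rw [hm] at hk; simp [vD] at hk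
    · have hqd : decide (P.ncard % 2 = 0) = false := decide_eq_false hq
      rw [hqd] at hk
      have hp1 : P.ncard % 2 = 1 := by omega
      rcases hm12 with hm | hm
      · have hk1 : k = 0 ∨ k = 1 := by rw [hm] at hk; simp [vD] at hk; omega
        rcases hk1 with rfl | rfl
        · obtain ⟨g, hgP, hval'⟩ := drop_move
          exact ⟨g, hgP, by rw [hval', hm, hqd]; rfl⟩
        · obtain ⟨g, hgP, hval'⟩ := stay_move hp1
          exact ⟨g, hgP, by rw [hval', hm, hqd]; rfl⟩
      · have hk1 : k = 0 ∨ k = 1 := by rw [hm] at hk; simp [vD] at hk; omega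
        rcases hk1 with rfl | rfl
        · obtain ⟨g, hgP, hval'⟩ := stay_move hp1
          exact ⟨g, hgP, by rw [hval', hm, hqd]; rfl⟩
        · obtain ⟨g, hgP, hval'⟩ := drop_move
          exact ⟨g, hgP, by rw [hval', hm, hqd]; rfl⟩
end Part5
-- Part 6: main induction
section Part6
variable {A : Type*} [CommGroup A] [Fintype A]

open Subgroup

lemma nuv_def (P : Set (Dih A)) :
    nuv P = Fval (Subgroup.closure P) (decide (P.ncard % 2 = 0)) := rfl

lemma ncard_lt_of_not_gen {P : Set (Dih A)} (hterm : Subgroup.closure P ≠ ⊤) :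
    P.ncard < Fintype.card (Dih A) := by
  have hne : P ≠ Set.univ := by
    intro h
    apply hterm
    rw [h]
    rw [eq_top_iff]
    intro x _
    exact Subgroup.subset_closure (Set.mem_univ x)
  have hss : P ⊂ Set.univ :=
    ⟨Set.subset_univ P, fun h => hne (Set.Subset.antisymm (Set.subset_univ P) h)⟩
  have := Set.ncard_lt_ncard hss Set.finite_univ
  simpa [Set.ncard_univ, Nat.card_eq_fintype_card] using this

lemma gameNim_eq_nuv (hA : Odd (Nat.card A)) (h2 : minGen A = 2) :
    ∀ n (P : Set (Dih A)), Fintype.card (Dih A) - P.ncard ≤ n → gameNim P = nuv P := by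
  intro n
  induction n with
  | zero =>
    intro P hP
    by_cases hterm : Subgroup.closure P = ⊤
    · rw [gameNim, if_pos hterm, nuv_def, hterm, Fval_top]
    · exfalso
      have := ncard_lt_of_not_gen hterm
      omega
  | succ n ih =>
    intro P hP
    by_cases hterm : Subgroup.closure P = ⊤
    · rw [gameNim, if_pos hterm, nuv_def, hterm, Fval_top]
    · rw [gameNim, if_neg hterm]
      have hcard := ncard_lt_of_not_gen hterm
      have hins : ∀ g ∉ P, gameNim (insert g P) = nuv (insert g P) := by
        intro g hg
        apply ih
        have h1 : (insert g P).ncard = P.ncard + 1 :=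
          Set.ncard_insert_of_notMem hg (Set.toFinite P)
        omega
      have hmem : nuv P ∈ {n : ℕ | ∀ g ∉ P, n ≠ gameNim (insert g P)} := by
        intro g hg
        rw [hins g hg, nuv_insert hg, nuv_def]
        exact (opt_ne h2 hterm g (decide (P.ncard % 2 = 0))).symm
      apply le_antisymm
      · exact Nat.sInf_le hmem
      · by_contra hlt
        push_neg at hlt
        have hsmem := Nat.sInf_mem (⟨nuv P, hmem⟩ :
          {n : ℕ | ∀ g ∉ P, n ≠ gameNim (insert g P)}.Nonempty)
        obtain ⟨g, hg, hval⟩ := opt_ex hA h2 hterm hlt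
        exact hsmem g hg (by rw [hins g hg, hval])

end Part6

/-- If `A` is a finite abelian group of odd order with `d(A) = 2`, then the
nim-number of the achievement game `GEN(Dih(A))` is `3`. -/
theorem gameNim_dih_odd_two_generated (A : Type*) [CommGroup A] [Fintype A]
    (hA : Odd (Nat.card A)) (h : minGen A = 2) :
    gameNim (∅ : Set (Dih A)) = 3 := by
  rw [gameNim_eq_nuv hA h (Fintype.card (Dih A)) ∅ (by omega)]
  rw [nuv_def, Subgroup.closure_empty]
  have hbot_ne : (⊥ : Subgroup (Dih A)) ≠ ⊤ := by
    intro hc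
    have h1 : dref (1 : A) ∈ (⊥ : Subgroup (Dih A)) := by
      rw [hc]; exact Subgroup.mem_top _
    rw [Subgroup.mem_bot] at h1
    exact dref_ne_one 1 h1
  have hcomap : (⊥ : Subgroup (Dih A)).comap (DihInl A) = ⊥ := by
    ext a
    simp only [Subgroup.mem_comap, Subgroup.mem_bot]
    constructor
    · intro ha
      exact SemidirectProduct.inl_injective (by rw [ha, map_one])
    · intro ha
      rw [ha, map_one]
  rw [Fval, if_neg hbot_ne, if_pos bot_le, hcomap, dA_bot h]
  simp [vR, Set.ncard_empty]
end

section
/- Let G be a nontrivial finite group of even order, let P be a subset of G that does not generate G, let I = ⌈P⌉ be the smallest intersection subgroup containing P, and suppose I has even order. Then the nim-number of the position P in the achievement game GEN(G) is determined as follows: if δ(I) = 1, then nim(P) = 1 when |P| is even and nim(P) = 2 when |P| is odd; if δ(I) = 2, then nim(P) = 0 when |P| is even and nim(P) = 2 when |P| is odd; if δ(I) ≥ 3, then nim(P) = 0 when |P| is even and nim(P) = 1 when |P| is odd. -/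
section StructureHelpers

variable {G : Type*} [Group G]

lemma subset_interCeil' (P : Set G) : P ⊆ (interCeil P : Set G) := by
  intro x hx
  simp only [interCeil, SetLike.mem_coe, Subgroup.mem_sInf, Set.mem_setOf_eq]
  intro M hM
  exact hM.2 hx

lemma interCeil_le_of_coatom' {P : Set G} {M : Subgroup G} (hM : IsCoatom M)
    (hPM : P ⊆ (M : Set G)) : interCeil P ≤ M :=
  sInf_le ⟨hM, hPM⟩

lemma interCeil_mono' {P Q : Set G} (h : P ⊆ Q) : interCeil P ≤ interCeil Q :=
  sInf_le_sInf (fun M hM => ⟨hM.1, h.trans hM.2⟩)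

variable [Fintype G]

lemma exists_coatom_of_ne_top' {P : Set G} (hP : Subgroup.closure P ≠ ⊤) :
    ∃ M : Subgroup G, IsCoatom M ∧ P ⊆ (M : Set G) := by
  rcases eq_top_or_exists_le_coatom (Subgroup.closure P) with h | ⟨M, hM, hle⟩
  · exact absurd h hP
  · exact ⟨M, hM, Subgroup.subset_closure.trans hle⟩

lemma interCeil_ne_top' {P : Set G} (hP : Subgroup.closure P ≠ ⊤) :
    interCeil P ≠ ⊤ := by
  obtain ⟨M, hM, hPM⟩ := exists_coatom_of_ne_top' hP
  intro h
  have := interCeil_le_of_coatom' hM hPM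
  rw [h] at this
  exact hM.1 (top_le_iff.mp this)

lemma defSet_nonempty' (P : Set G) :
    {n : ℕ | ∃ Q : Finset G, Q.card = n ∧ Subgroup.closure (P ∪ ↑Q) = ⊤}.Nonempty := by
  refine ⟨(Finset.univ : Finset G).card, Finset.univ, rfl, ?_⟩
  simp

lemma deficiency_spec' (P : Set G) :
    ∃ Q : Finset G, Q.card = deficiency P ∧ Subgroup.closure (P ∪ ↑Q) = ⊤ :=
  Nat.sInf_mem (defSet_nonempty' P)

lemma deficiency_mono' {P Q : Set G} (h : P ⊆ Q) : deficiency Q ≤ deficiency P := by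
  obtain ⟨R, hR, hRt⟩ := deficiency_spec' P
  refine Nat.sInf_le ⟨R, hR, ?_⟩
  refine eq_top_iff.mpr ?_
  rw [← hRt]
  exact Subgroup.closure_mono (Set.union_subset_union_left _ h)

lemma deficiency_eq_zero_iff' {P : Set G} :
    deficiency P = 0 ↔ Subgroup.closure P = ⊤ := by
  constructor
  · intro h
    obtain ⟨Q, hQ, hQt⟩ := deficiency_spec' P
    rw [h, Finset.card_eq_zero] at hQ
    subst hQ
    simpa using hQt
  · intro h
    refine Nat.le_zero.mp (Nat.sInf_le ⟨∅, rfl, ?_⟩)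
    simpa using h

lemma deficiency_pos' {P : Set G} (hP : Subgroup.closure P ≠ ⊤) : 1 ≤ deficiency P :=
  Nat.one_le_iff_ne_zero.mpr (fun h => hP (deficiency_eq_zero_iff'.mp h))

lemma deficiency_le_one_of_terminal' {P : Set G} {g : G}
    (h : Subgroup.closure (insert g P) = ⊤) : deficiency P ≤ 1 := by
  refine Nat.sInf_le ⟨{g}, Finset.card_singleton g, ?_⟩
  rw [Finset.coe_singleton, Set.union_singleton]
  exact h

lemma deficiency_le_insert_add_one' (P : Set G) (g : G) :
    deficiency P ≤ deficiency (insert g P) + 1 := by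
  haveI := Classical.decEq G
  obtain ⟨R, hR, hRt⟩ := deficiency_spec' (insert g P)
  have hmem : (insert g R).card ∈
      {n : ℕ | ∃ Q : Finset G, Q.card = n ∧ Subgroup.closure (P ∪ ↑Q) = ⊤} := by
    refine ⟨insert g R, rfl, ?_⟩
    rw [Finset.coe_insert, Set.union_insert, ← Set.insert_union]
    exact hRt
  calc deficiency P ≤ (insert g R).card := Nat.sInf_le hmem
    _ ≤ R.card + 1 := Finset.card_insert_le g R
    _ = deficiency (insert g P) + 1 := by rw [hR]

lemma deficiency_insert_of_mem_interCeil' {P : Set G} {g : G} (hg : g ∈ interCeil P) :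
    deficiency (insert g P) = deficiency P := by
  refine le_antisymm (deficiency_mono' (Set.subset_insert g P)) ?_
  obtain ⟨R, hR, hRt⟩ := deficiency_spec' (insert g P)
  refine Nat.sInf_le ⟨R, hR, ?_⟩
  by_contra hne
  obtain ⟨M, hM, hPM⟩ := exists_coatom_of_ne_top' hne
  have hXM : interCeil P ≤ M :=
    interCeil_le_of_coatom' hM (Set.subset_union_left.trans hPM)
  have hsub : (insert g P ∪ ↑R) ⊆ (M : Set G) := by
    refine Set.union_subset (Set.insert_subset (hXM hg) ?_) ?_
    · exact Set.subset_union_left.trans hPM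
    · exact Set.subset_union_right.trans hPM
  have := (Subgroup.closure_le M).mpr hsub
  rw [hRt] at this
  exact hM.1 (top_le_iff.mp this)

lemma exists_terminal_of_def_one' {P : Set G} (hP : Subgroup.closure P ≠ ⊤)
    (h1 : deficiency P = 1) :
    ∃ g, g ∉ P ∧ Subgroup.closure (insert g P) = ⊤ := by
  obtain ⟨Q, hQ, hQt⟩ := deficiency_spec' P
  rw [h1, Finset.card_eq_one] at hQ
  obtain ⟨g, rfl⟩ := hQ
  rw [Finset.coe_singleton, Set.union_singleton] at hQt
  refine ⟨g, ?_, hQt⟩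
  intro hgP
  rw [Set.insert_eq_self.mpr hgP] at hQt
  exact hP hQt

lemma exists_def_one_option' {P : Set G} (h2 : deficiency P = 2) :
    ∃ g, g ∉ P ∧ Subgroup.closure (insert g P) ≠ ⊤ ∧ deficiency (insert g P) = 1 := by
  haveI := Classical.decEq G
  obtain ⟨Q, hQ, hQt⟩ := deficiency_spec' P
  rw [h2] at hQ
  have hne : Q.Nonempty := Finset.card_pos.mp (by omega)
  obtain ⟨g, hg⟩ := hne
  have hunion : (insert g P : Set G) ∪ ↑(Q.erase g) = P ∪ ↑Q := by
    conv_rhs => rw [← Finset.insert_erase hg]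
    rw [Finset.coe_insert, Set.union_insert, ← Set.insert_union]
  have hdle : deficiency (insert g P) ≤ 1 := by
    refine Nat.sInf_le ⟨Q.erase g, ?_, ?_⟩
    · rw [Finset.card_erase_of_mem hg, hQ]
    · rw [hunion]; exact hQt
  have hgP : g ∉ P := by
    intro hgP
    rw [Set.insert_eq_self.mpr hgP] at hdle
    omega
  have hnt : Subgroup.closure (insert g P) ≠ ⊤ := by
    intro ht
    have := deficiency_le_one_of_terminal' ht
    omega
  exact ⟨g, hgP, hnt, le_antisymm hdle (deficiency_pos' hnt)⟩

lemma gameNim_terminal' {P : Set G} (h : Subgroup.closure P = ⊤) : gameNim P = 0 := by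
  rw [gameNim, if_pos h]

lemma gameNim_eq_of' {P : Set G} (hP : Subgroup.closure P ≠ ⊤) {t : ℕ}
    (hmem : ∀ g ∉ P, t ≠ gameNim (insert g P))
    (hlt : ∀ k < t, ∃ g ∉ P, gameNim (insert g P) = k) :
    gameNim P = t := by
  rw [gameNim, if_neg hP]
  refine le_antisymm (Nat.sInf_le hmem) ?_
  by_contra hc
  push_neg at hc
  have hS := Nat.sInf_mem (⟨t, hmem⟩ :
    Set.Nonempty {n : ℕ | ∀ g ∉ P, n ≠ gameNim (insert g P)})
  obtain ⟨g, hg, hgk⟩ := hlt _ hc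
  exact hS g hg hgk.symm

lemma even_interCeil_insert' {P : Set G} (g : G)
    (h : Even (Nat.card (interCeil P))) : Even (Nat.card (interCeil (insert g P))) :=
  even_iff_two_dvd.mpr (dvd_trans (even_iff_two_dvd.mp h)
    (Subgroup.card_dvd_of_le (interCeil_mono' (Set.subset_insert g P))))

lemma deficiency_interCeil' (P : Set G) :
    deficiency ((interCeil P : Set G)) = deficiency P := by
  unfold deficiency
  congr 1
  ext n
  constructor
  · rintro ⟨Q, h1, h2⟩
    refine ⟨Q, h1, ?_⟩
    by_contra hne
    obtain ⟨M, hM, hPM⟩ := exists_coatom_of_ne_top' hne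
    have hXM : interCeil P ≤ M :=
      interCeil_le_of_coatom' hM (Set.subset_union_left.trans hPM)
    have hsub : ((interCeil P : Set G) ∪ ↑Q) ⊆ (M : Set G) :=
      Set.union_subset hXM (Set.subset_union_right.trans hPM)
    have := (Subgroup.closure_le M).mpr hsub
    rw [h2] at this
    exact hM.1 (top_le_iff.mp this)
  · rintro ⟨Q, h1, h2⟩
    refine ⟨Q, h1, eq_top_iff.mpr ?_⟩
    rw [← h2]
    exact Subgroup.closure_mono (Set.union_subset_union_left _ (subset_interCeil' P))

end StructureHelpers


lemma gameNim_even_main {G : Type*} [Group G] [Fintype G] :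
    ∀ (n : ℕ) (P : Set G), Fintype.card G - P.ncard ≤ n → Subgroup.closure P ≠ ⊤ →
      Even (Nat.card (interCeil P)) →
      gameNim P = if Even P.ncard then (if deficiency P = 1 then 1 else 0)
                  else (if deficiency P ≤ 2 then 2 else 1) := by
  intro n
  induction n with
  | zero =>
    intro P hn hP _
    exfalso
    apply hP
    have huniv : P = Set.univ := by
      refine Set.eq_of_subset_of_ncard_le (Set.subset_univ P) ?_
      rw [Set.ncard_univ, Nat.card_eq_fintype_card]
      omega
    rw [huniv, Subgroup.closure_univ]
  | succ n ih =>
    intro P hn hP hEv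
    have hPX : P ⊆ (interCeil P : Set G) := subset_interCeil' P
    have hXt : interCeil P ≠ ⊤ := interCeil_ne_top' hP
    have hδ1 : 1 ≤ deficiency P := deficiency_pos' hP
    have hlt : P.ncard < Fintype.card G := by
      have hle : P.ncard ≤ Fintype.card G := by
        have := Set.ncard_le_ncard (Set.subset_univ P) (Set.toFinite _)
        simpa [Set.ncard_univ, Nat.card_eq_fintype_card] using this
      rcases lt_or_eq_of_le hle with h | h
      · exact h
      · exfalso
        apply hP
        have huniv : P = Set.univ := by
          refine Set.eq_of_subset_of_ncard_le (Set.subset_univ P) ?_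
          rw [Set.ncard_univ, Nat.card_eq_fintype_card, h]
        rw [huniv, Subgroup.closure_univ]
    have hpar : ∀ g ∉ P, (insert g P).ncard = P.ncard + 1 := fun g hg =>
      Set.ncard_insert_of_notMem hg (Set.toFinite P)
    have hopt : ∀ g ∉ P, Subgroup.closure (insert g P) ≠ ⊤ →
        gameNim (insert g P) =
          if Even (insert g P).ncard then (if deficiency (insert g P) = 1 then 1 else 0)
          else (if deficiency (insert g P) ≤ 2 then 2 else 1) := by
      intro g hg hgt
      refine ih (insert g P) ?_ hgt (even_interCeil_insert' g hEv)
      rw [hpar g hg]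
      omega
    have hub : ∀ g : G, deficiency (insert g P) ≤ deficiency P := fun g =>
      deficiency_mono' (Set.subset_insert g P)
    have hlb : ∀ g : G, deficiency P ≤ deficiency (insert g P) + 1 := fun g =>
      deficiency_le_insert_add_one' P g
    -- in-class options exist when the parity of |P| is odd
    have hinclass : ¬ Even P.ncard → ∃ g, g ∉ P ∧ Subgroup.closure (insert g P) ≠ ⊤ ∧
        deficiency (insert g P) = deficiency P := by
      intro hodd
      have hXeven : Even ((interCeil P : Set G)).ncard := by
        rw [← Nat.card_coe_set_eq, SetLike.coe_sort_coe]
        exact hEv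
      have hne : P ≠ (interCeil P : Set G) := by
        intro h
        rw [h] at hodd
        exact hodd hXeven
      obtain ⟨g, hgX, hgP⟩ := Set.exists_of_ssubset (ssubset_of_subset_of_ne hPX hne)
      refine ⟨g, hgP, ?_, deficiency_insert_of_mem_interCeil' hgX⟩
      intro h
      have hle : Subgroup.closure (insert g P) ≤ interCeil P :=
        (Subgroup.closure_le _).mpr (Set.insert_subset hgX hPX)
      rw [h] at hle
      exact hXt (top_le_iff.mp hle)
    -- the value of a non-terminal option, with parity flipped
    have hoptval : ∀ g ∉ P, Subgroup.closure (insert g P) ≠ ⊤ →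
        gameNim (insert g P) =
          if ¬ Even P.ncard then (if deficiency (insert g P) = 1 then 1 else 0)
          else (if deficiency (insert g P) ≤ 2 then 2 else 1) := by
      intro g hg hgt
      rw [hopt g hg hgt]
      have hparity : Even (insert g P).ncard ↔ ¬ Even P.ncard := by
        rw [hpar g hg]
        exact Nat.even_add_one
      by_cases hb : Even P.ncard
      · have h1 : ¬ Even (insert g P).ncard := fun h => (hparity.mp h) hb
        have h2 : ¬¬ Even P.ncard := not_not_intro hb
        rw [if_neg h1, if_neg h2]
      · rw [if_pos (hparity.mpr hb), if_pos hb]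
    by_cases hb : Even P.ncard
    · rw [if_pos hb]
      by_cases hd1 : deficiency P = 1
      · -- δ = 1, |P| even : nim = 1
        rw [if_pos hd1]
        refine gameNim_eq_of' hP ?_ ?_
        · intro g hg
          by_cases hgt : Subgroup.closure (insert g P) = ⊤
          · rw [gameNim_terminal' hgt]; omega
          · rw [hoptval g hg hgt, if_neg (not_not_intro hb)]
            have h1 := deficiency_pos' hgt
            have h2 := hub g
            rw [hd1] at h2
            have : deficiency (insert g P) = 1 := by omega
            rw [if_pos (by omega)]
            omega
        · intro k hk
          have hk0 : k = 0 := by omega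
          obtain ⟨g, hg, hgt⟩ := exists_terminal_of_def_one' hP hd1
          exact ⟨g, hg, by rw [gameNim_terminal' hgt, hk0]⟩
      · -- δ ≥ 2, |P| even : nim = 0
        rw [if_neg hd1]
        refine gameNim_eq_of' hP ?_ (by omega)
        intro g hg
        by_cases hgt : Subgroup.closure (insert g P) = ⊤
        · exfalso
          have := deficiency_le_one_of_terminal' hgt
          omega
        · rw [hoptval g hg hgt, if_neg (not_not_intro hb)]
          split_ifs <;> omega
    · rw [if_neg hb]
      obtain ⟨g₀, hg₀, hg₀t, hg₀d⟩ := hinclass hb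
      by_cases hd2 : deficiency P ≤ 2
      · -- δ ∈ {1,2}, |P| odd : nim = 2
        rw [if_pos hd2]
        refine gameNim_eq_of' hP ?_ ?_
        · intro g hg
          by_cases hgt : Subgroup.closure (insert g P) = ⊤
          · rw [gameNim_terminal' hgt]; omega
          · rw [hoptval g hg hgt, if_pos hb]
            split_ifs <;> omega
        · intro k hk
          have : k = 0 ∨ k = 1 := by omega
          rcases this with rfl | rfl
          · -- value 0 : terminal if δ=1, in-class if δ=2
            by_cases hd1 : deficiency P = 1
            · obtain ⟨g, hg, hgt⟩ := exists_terminal_of_def_one' hP hd1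
              exact ⟨g, hg, gameNim_terminal' hgt⟩
            · refine ⟨g₀, hg₀, ?_⟩
              rw [hoptval g₀ hg₀ hg₀t, if_pos hb, hg₀d, if_neg hd1]
          · -- value 1 : an option with deficiency 1
            by_cases hd1 : deficiency P = 1
            · refine ⟨g₀, hg₀, ?_⟩
              rw [hoptval g₀ hg₀ hg₀t, if_pos hb, hg₀d, if_pos hd1]
            · have hd2' : deficiency P = 2 := by omega
              obtain ⟨g, hg, hgt, hgd⟩ := exists_def_one_option' hd2'
              refine ⟨g, hg, ?_⟩
              rw [hoptval g hg hgt, if_pos hb, if_pos hgd]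
      · -- δ ≥ 3, |P| odd : nim = 1
        rw [if_neg hd2]
        refine gameNim_eq_of' hP ?_ ?_
        · intro g hg
          by_cases hgt : Subgroup.closure (insert g P) = ⊤
          · exfalso
            have := deficiency_le_one_of_terminal' hgt
            omega
          · rw [hoptval g hg hgt, if_pos hb]
            have := hlb g
            rw [if_neg (by omega)]
            omega
        · intro k hk
          have hk0 : k = 0 := by omega
          refine ⟨g₀, hg₀, ?_⟩
          rw [hoptval g₀ hg₀ hg₀t, if_pos hb, hg₀d, if_neg (by omega), hk0]

/-- For a nontrivial finite group `G` of even order and a non-generating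
position `P` whose smallest containing intersection subgroup `I = ⌈P⌉` has
even order: if `δ(I) = 1` then `nim(P)` is `1`/`2` according as `|P|` is
even/odd; if `δ(I) = 2` then `nim(P)` is `0`/`2`; and if `δ(I) ≥ 3` then
`nim(P)` is `0`/`1`. -/
theorem gameNim_even_structure_classes (G : Type*) [Group G] [Fintype G] [Nontrivial G]
    (hG : Even (Nat.card G)) (P : Set G) (hP : Subgroup.closure P ≠ ⊤)
    (I : Subgroup G) (hIdef : I = interCeil P) (hIeven : Even (Nat.card I)) :
    (deficiency (I : Set G) = 1 → gameNim P = if Even P.ncard then 1 else 2) ∧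
    (deficiency (I : Set G) = 2 → gameNim P = if Even P.ncard then 0 else 2) ∧
    (3 ≤ deficiency (I : Set G) → gameNim P = if Even P.ncard then 0 else 1) := by
  subst hIdef
  have hd : deficiency ((interCeil P : Set G)) = deficiency P := deficiency_interCeil' P
  have hmain := gameNim_even_main (Fintype.card G) P (by omega) hP hIeven
  refine ⟨?_, ?_, ?_⟩ <;> intro h <;> rw [hd] at h <;> rw [hmain] <;>
    split_ifs <;> omega
end

section
/- Let G be a nontrivial finite group, let I be an intersection subgroup of G, and let m = δ(I) with m ≥ 1. Then there exists g ∈ G with δ(I ∪ {g}) = m − 1, and for every g ∈ G one has δ(I ∪ {g}) ∈ {m − 1, m}. -/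
/-- If `I` is an intersection subgroup of a nontrivial finite group `G` with
`δ(I) = m ≥ 1`, then some `g ∈ G` satisfies `δ(I ∪ {g}) = m - 1`, and every
`g ∈ G` satisfies `δ(I ∪ {g}) ∈ {m - 1, m}`. -/
theorem deficiency_insert (G : Type*) [Group G] [Fintype G] [Nontrivial G]
    (I : Subgroup G) (hI : IsIntersectionSubgroup I)
    (m : ℕ) (hm : deficiency (I : Set G) = m) (hm1 : 1 ≤ m) :
    (∃ g : G, deficiency (insert g (I : Set G)) = m - 1) ∧
    (∀ g : G, deficiency (insert g (I : Set G)) = m - 1 ∨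
      deficiency (insert g (I : Set G)) = m) := by
  classical
  have hne : ∀ P : Set G,
      {n : ℕ | ∃ Q : Finset G, Q.card = n ∧ Subgroup.closure (P ∪ ↑Q) = ⊤}.Nonempty := by
    intro P
    refine ⟨Fintype.card G, Finset.univ, rfl, ?_⟩
    rw [eq_top_iff]
    intro x _
    exact Subgroup.subset_closure (Or.inr (Finset.mem_coe.2 (Finset.mem_univ x)))
  have hmem : ∀ P : Set G, ∃ Q : Finset G, Q.card = deficiency P ∧
      Subgroup.closure (P ∪ ↑Q) = ⊤ := fun P => Nat.sInf_mem (hne P)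
  have hle : ∀ (P : Set G) (Q : Finset G), Subgroup.closure (P ∪ ↑Q) = ⊤ →
      deficiency P ≤ Q.card := fun P Q h => Nat.sInf_le ⟨Q, rfl, h⟩
  have hmono : ∀ g : G, deficiency (insert g (I : Set G)) ≤ m := by
    intro g
    obtain ⟨Q, hQc, hQt⟩ := hmem (I : Set G)
    rw [← hm, ← hQc]
    apply hle
    rw [eq_top_iff, ← hQt]
    exact Subgroup.closure_mono (Set.union_subset_union_left _ (Set.subset_insert _ _))
  have hlb : ∀ g : G, m - 1 ≤ deficiency (insert g (I : Set G)) := by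
    intro g
    obtain ⟨Q, hQc, hQt⟩ := hmem (insert g (I : Set G))
    have h1 : deficiency (I : Set G) ≤ (insert g Q).card := by
      apply hle
      rw [eq_top_iff, ← hQt]
      apply Subgroup.closure_mono
      intro x hx
      rcases hx with hx | hx
      · rcases Set.mem_insert_iff.1 hx with rfl | hx
        · exact Or.inr (Finset.mem_coe.2 (Finset.mem_insert_self _ _))
        · exact Or.inl hx
      · exact Or.inr (Finset.mem_coe.2 (Finset.mem_insert_of_mem hx))
    have hcard : (insert g Q).card ≤ Q.card + 1 := Finset.card_insert_le _ _
    omega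
  constructor
  · obtain ⟨Q, hQc, hQt⟩ := hmem (I : Set G)
    have hQne : Q.Nonempty := by
      rw [← Finset.card_pos, hQc, hm]; omega
    obtain ⟨g, hg⟩ := hQne
    refine ⟨g, le_antisymm ?_ (hlb g)⟩
    have h2 : deficiency (insert g (I : Set G)) ≤ (Q.erase g).card := by
      apply hle
      rw [eq_top_iff, ← hQt]
      apply Subgroup.closure_mono
      intro x hx
      rcases hx with hx | hx
      · exact Or.inl (Set.mem_insert_of_mem _ hx)
      · by_cases hxg : x = g
        · exact Or.inl (hxg ▸ Set.mem_insert _ _)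
        · exact Or.inr (Finset.mem_coe.2 (Finset.mem_erase.2 ⟨hxg, hx⟩))
    have h3 : (Q.erase g).card = m - 1 := by
      rw [Finset.card_erase_of_mem hg, hQc, hm]
    omega
  · intro g
    have := hmono g
    have := hlb g
    omega
end
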